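/- arXiv:2506.09077 — 7 statements merged into one kernel-verified Lean document; each statement's English description precedes it below -/
import Mathlib

section
/- For a state u in the saturation triangle Δ, the discriminant (tr J(u))² − 4·det J(u) of the Jacobian J(u) vanishes if and only if u is one of the vertices G = (0,1), W = (1,0), O = (0,0) or the umbilic point U = (μ_w/μ_tot, μ_g/μ_tot). Equivalently, the slow characteristic speed is strictly smaller than the fast characteristic speed everywhere on the closed triangle except at G, W, O, and U. -/
open Matrix Polynomial

noncomputable section ThreePhaseFlow

/-- Oil saturation `s_o = 1 - s_w - s_g`. -/
def so (u : ℝ × ℝ) : ℝ := 1 - u.1 - u.2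

/-- The denominator `D(u) = s_w^2/μ_w + s_g^2/μ_g + s_o^2/μ_o`. -/
def Dfun (μw μg μo : ℝ) (u : ℝ × ℝ) : ℝ :=
  u.1 ^ 2 / μw + u.2 ^ 2 / μg + so u ^ 2 / μo

/-- Water fractional flow `f_w`. -/
def fw (μw μg μo : ℝ) (u : ℝ × ℝ) : ℝ := u.1 ^ 2 / (μw * Dfun μw μg μo u)

/-- Gas fractional flow `f_g`. -/
def fg (μw μg μo : ℝ) (u : ℝ × ℝ) : ℝ := u.2 ^ 2 / (μg * Dfun μw μg μo u)

/-- Oil fractional flow `f_o`. -/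
def fo (μw μg μo : ℝ) (u : ℝ × ℝ) : ℝ := so u ^ 2 / (μo * Dfun μw μg μo u)

/-- The flux map `F(u) = (f_w(u), f_g(u))`. -/
def flux (μw μg μo : ℝ) (u : ℝ × ℝ) : ℝ × ℝ :=
  (fw μw μg μo u, fg μw μg μo u)

/-- The saturation triangle `Δ`. -/
def satTriangle : Set (ℝ × ℝ) := {u | 0 ≤ u.1 ∧ 0 ≤ u.2 ∧ u.1 + u.2 ≤ 1}

/-- The Jacobian matrix `J(u)` of the flux map at `u`. -/
def jac (μw μg μo : ℝ) (u : ℝ × ℝ) : Matrix (Fin 2) (Fin 2) ℝ :=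
  !![fderiv ℝ (fw μw μg μo) u (1, 0), fderiv ℝ (fw μw μg μo) u (0, 1);
     fderiv ℝ (fg μw μg μo) u (1, 0), fderiv ℝ (fg μw μg μo) u (0, 1)]

/- ===================== Auxiliary lemmas ===================== -/

/-- Quotient rule packaged for our use. -/
lemma hasFDerivAt_quot' {num den : ℝ × ℝ → ℝ} {Ln Ld : ℝ × ℝ →L[ℝ] ℝ} {u : ℝ × ℝ}
    (hn : HasFDerivAt num Ln u) (hd : HasFDerivAt den Ld u) (h0 : den u ≠ 0) :
    HasFDerivAt (fun v => num v / den v)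
      ((den u)⁻¹ • Ln + (-(num u) * ((den u) ^ 2)⁻¹) • Ld) u := by
  have hinv : HasFDerivAt (fun v => (den v)⁻¹) ((-((den u) ^ 2)⁻¹) • Ld) u :=
    (hasDerivAt_inv h0).comp_hasFDerivAt u hd
  have h := hn.mul hinv
  have heq : ((den u)⁻¹ • Ln + (-(num u) * ((den u) ^ 2)⁻¹) • Ld)
      = (num u • ((-((den u) ^ 2)⁻¹) • Ld) + (den u)⁻¹ • Ln) :=
    ContinuousLinearMap.ext fun v => by simp; ring
  rw [heq]
  simpa only [div_eq_mul_inv, Pi.mul_def] using h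

lemma hasFDerivAt_Dfun' (μw μg μo : ℝ) (u : ℝ × ℝ) :
    HasFDerivAt (Dfun μw μg μo)
      (μw⁻¹ • (u.1 • ContinuousLinearMap.fst ℝ ℝ ℝ + u.1 • ContinuousLinearMap.fst ℝ ℝ ℝ)
        + μg⁻¹ • (u.2 • ContinuousLinearMap.snd ℝ ℝ ℝ + u.2 • ContinuousLinearMap.snd ℝ ℝ ℝ)
        + μo⁻¹ • (so u • ((0 : ℝ × ℝ →L[ℝ] ℝ) - ContinuousLinearMap.fst ℝ ℝ ℝ - ContinuousLinearMap.snd ℝ ℝ ℝ)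
           + so u • ((0 : ℝ × ℝ →L[ℝ] ℝ) - ContinuousLinearMap.fst ℝ ℝ ℝ - ContinuousLinearMap.snd ℝ ℝ ℝ))) u := by
  have h1 : HasFDerivAt (fun v : ℝ × ℝ => v.1) (ContinuousLinearMap.fst ℝ ℝ ℝ) u := hasFDerivAt_fst
  have h2 : HasFDerivAt (fun v : ℝ × ℝ => v.2) (ContinuousLinearMap.snd ℝ ℝ ℝ) u := hasFDerivAt_snd
  have hso : HasFDerivAt so ((0 : ℝ × ℝ →L[ℝ] ℝ) - ContinuousLinearMap.fst ℝ ℝ ℝ - ContinuousLinearMap.snd ℝ ℝ ℝ) u :=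
    ((hasFDerivAt_const (1:ℝ) u).sub h1).sub h2
  have hn1 : HasFDerivAt (fun v : ℝ × ℝ => v.1 ^ 2)
      (u.1 • ContinuousLinearMap.fst ℝ ℝ ℝ + u.1 • ContinuousLinearMap.fst ℝ ℝ ℝ) u := by
    simpa [pow_two, Pi.mul_def] using h1.mul h1
  have hn2 : HasFDerivAt (fun v : ℝ × ℝ => v.2 ^ 2)
      (u.2 • ContinuousLinearMap.snd ℝ ℝ ℝ + u.2 • ContinuousLinearMap.snd ℝ ℝ ℝ) u := by
    simpa [pow_two, Pi.mul_def] using h2.mul h2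
  have hn3 : HasFDerivAt (fun v => so v ^ 2)
      (so u • ((0 : ℝ × ℝ →L[ℝ] ℝ) - ContinuousLinearMap.fst ℝ ℝ ℝ - ContinuousLinearMap.snd ℝ ℝ ℝ)
        + so u • ((0 : ℝ × ℝ →L[ℝ] ℝ) - ContinuousLinearMap.fst ℝ ℝ ℝ - ContinuousLinearMap.snd ℝ ℝ ℝ)) u := by
    simpa [pow_two, Pi.mul_def] using hso.mul hso
  have h := ((hn1.const_mul μw⁻¹).add (hn2.const_mul μg⁻¹)).add (hn3.const_mul μo⁻¹)
  have heq : (fun v => μw⁻¹ * v.1 ^ 2 + μg⁻¹ * v.2 ^ 2 + μo⁻¹ * so v ^ 2) = Dfun μw μg μo := by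
    funext v; simp [Dfun, div_eq_inv_mul]
  simp only [Pi.add_def] at h; rwa [heq] at h

lemma fw_deriv1 (μw μg μo : ℝ) (u : ℝ × ℝ) (hw : μw ≠ 0) (hD : Dfun μw μg μo u ≠ 0) :
    fderiv ℝ (fw μw μg μo) u (1, 0)
      = (2 * u.1 * Dfun μw μg μo u - u.1 ^ 2 * (2 * u.1 / μw - 2 * so u / μo))
          / (μw * Dfun μw μg μo u ^ 2) := by
  have h1 : HasFDerivAt (fun v : ℝ × ℝ => v.1) (ContinuousLinearMap.fst ℝ ℝ ℝ) u := hasFDerivAt_fst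
  have hn1 : HasFDerivAt (fun v : ℝ × ℝ => v.1 ^ 2)
      (u.1 • ContinuousLinearMap.fst ℝ ℝ ℝ + u.1 • ContinuousLinearMap.fst ℝ ℝ ℝ) u := by
    simpa [pow_two, Pi.mul_def] using h1.mul h1
  have hden := (hasFDerivAt_Dfun' μw μg μo u).const_mul μw
  have hD' : μw * Dfun μw μg μo u ≠ 0 := mul_ne_zero hw hD
  have hq := hasFDerivAt_quot' hn1 hden hD'
  rw [show (fw μw μg μo) = (fun v => v.1 ^ 2 / (μw * Dfun μw μg μo v)) from rfl, hq.fderiv]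
  simp only [ContinuousLinearMap.add_apply, ContinuousLinearMap.smul_apply,
    ContinuousLinearMap.sub_apply, ContinuousLinearMap.zero_apply,
    ContinuousLinearMap.coe_fst', ContinuousLinearMap.coe_snd', smul_eq_mul]
  field_simp
  ring

lemma fw_deriv2 (μw μg μo : ℝ) (u : ℝ × ℝ) (hw : μw ≠ 0) (hD : Dfun μw μg μo u ≠ 0) :
    fderiv ℝ (fw μw μg μo) u (0, 1)
      = (- u.1 ^ 2 * (2 * u.2 / μg - 2 * so u / μo)) / (μw * Dfun μw μg μo u ^ 2) := by
  have h1 : HasFDerivAt (fun v : ℝ × ℝ => v.1) (ContinuousLinearMap.fst ℝ ℝ ℝ) u := hasFDerivAt_fst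
  have hn1 : HasFDerivAt (fun v : ℝ × ℝ => v.1 ^ 2)
      (u.1 • ContinuousLinearMap.fst ℝ ℝ ℝ + u.1 • ContinuousLinearMap.fst ℝ ℝ ℝ) u := by
    simpa [pow_two, Pi.mul_def] using h1.mul h1
  have hden := (hasFDerivAt_Dfun' μw μg μo u).const_mul μw
  have hD' : μw * Dfun μw μg μo u ≠ 0 := mul_ne_zero hw hD
  have hq := hasFDerivAt_quot' hn1 hden hD'
  rw [show (fw μw μg μo) = (fun v => v.1 ^ 2 / (μw * Dfun μw μg μo v)) from rfl, hq.fderiv]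
  simp only [ContinuousLinearMap.add_apply, ContinuousLinearMap.smul_apply,
    ContinuousLinearMap.sub_apply, ContinuousLinearMap.zero_apply,
    ContinuousLinearMap.coe_fst', ContinuousLinearMap.coe_snd', smul_eq_mul]
  field_simp
  ring

lemma fg_deriv1 (μw μg μo : ℝ) (u : ℝ × ℝ) (hg : μg ≠ 0) (hD : Dfun μw μg μo u ≠ 0) :
    fderiv ℝ (fg μw μg μo) u (1, 0)
      = (- u.2 ^ 2 * (2 * u.1 / μw - 2 * so u / μo)) / (μg * Dfun μw μg μo u ^ 2) := by
  have h2 : HasFDerivAt (fun v : ℝ × ℝ => v.2) (ContinuousLinearMap.snd ℝ ℝ ℝ) u := hasFDerivAt_snd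
  have hn2 : HasFDerivAt (fun v : ℝ × ℝ => v.2 ^ 2)
      (u.2 • ContinuousLinearMap.snd ℝ ℝ ℝ + u.2 • ContinuousLinearMap.snd ℝ ℝ ℝ) u := by
    simpa [pow_two, Pi.mul_def] using h2.mul h2
  have hden := (hasFDerivAt_Dfun' μw μg μo u).const_mul μg
  have hD' : μg * Dfun μw μg μo u ≠ 0 := mul_ne_zero hg hD
  have hq := hasFDerivAt_quot' hn2 hden hD'
  rw [show (fg μw μg μo) = (fun v => v.2 ^ 2 / (μg * Dfun μw μg μo v)) from rfl, hq.fderiv]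
  simp only [ContinuousLinearMap.add_apply, ContinuousLinearMap.smul_apply,
    ContinuousLinearMap.sub_apply, ContinuousLinearMap.zero_apply,
    ContinuousLinearMap.coe_fst', ContinuousLinearMap.coe_snd', smul_eq_mul]
  field_simp
  ring

lemma fg_deriv2 (μw μg μo : ℝ) (u : ℝ × ℝ) (hg : μg ≠ 0) (hD : Dfun μw μg μo u ≠ 0) :
    fderiv ℝ (fg μw μg μo) u (0, 1)
      = (2 * u.2 * Dfun μw μg μo u - u.2 ^ 2 * (2 * u.2 / μg - 2 * so u / μo))
          / (μg * Dfun μw μg μo u ^ 2) := by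
  have h2 : HasFDerivAt (fun v : ℝ × ℝ => v.2) (ContinuousLinearMap.snd ℝ ℝ ℝ) u := hasFDerivAt_snd
  have hn2 : HasFDerivAt (fun v : ℝ × ℝ => v.2 ^ 2)
      (u.2 • ContinuousLinearMap.snd ℝ ℝ ℝ + u.2 • ContinuousLinearMap.snd ℝ ℝ ℝ) u := by
    simpa [pow_two, Pi.mul_def] using h2.mul h2
  have hden := (hasFDerivAt_Dfun' μw μg μo u).const_mul μg
  have hD' : μg * Dfun μw μg μo u ≠ 0 := mul_ne_zero hg hD
  have hq := hasFDerivAt_quot' hn2 hden hD'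
  rw [show (fg μw μg μo) = (fun v => v.2 ^ 2 / (μg * Dfun μw μg μo v)) from rfl, hq.fderiv]
  simp only [ContinuousLinearMap.add_apply, ContinuousLinearMap.smul_apply,
    ContinuousLinearMap.sub_apply, ContinuousLinearMap.zero_apply,
    ContinuousLinearMap.coe_fst', ContinuousLinearMap.coe_snd', smul_eq_mul]
  field_simp
  ring

set_option maxHeartbeats 1000000 in
/-- Positivity of the discriminant numerator in the case `y < z < x`. -/
lemma auxPos (w g x y z : ℝ) (hw : 0 < w) (hg : 0 < g) (ho : 0 < 1 - w - g)
    (h1 : y < z) (h2 : z < x) :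
    0 < (x*y*(g-w) + z*(x-y) + z*(w*y-g*x))^2 + 4*w*g*x*y*(x-z)*(y-z) := by
  have hp : 0 < x - z := by linarith
  have hq : 0 < z - y := by linarith
  have hxy : 0 < x - y := by linarith
  have hL : 0 < ((x-z)*(1-w)-(z-y)*(1-g))^2 + 4*((x-z)*((z-y)*(1-w-g))) := by positivity
  have key : (((x-z)*(1-w)-(z-y)*(1-g))^2 + 4*((x-z)*((z-y)*(1-w-g)))) *
      ((x*y*(g-w) + z*(x-y) + z*(w*y-g*x))^2 + 4*w*g*x*y*(x-z)*(y-z))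
      = ((((x-z)*(1-w)-(z-y)*(1-g))^2 + 4*((x-z)*((z-y)*(1-w-g)))) * z
          + ((x-z)*(w*(1-w-g)-g) + (z-y)*(w-g*(1-w-g))) * ((x-z)*(z-y)))^2
        + 4*(w*(g*((1-w-g)*((x-z)^2*((z-y)^2*(x-y)^2))))) := by ring
  have hR : 0 < ((((x-z)*(1-w)-(z-y)*(1-g))^2 + 4*((x-z)*((z-y)*(1-w-g)))) * z
          + ((x-z)*(w*(1-w-g)-g) + (z-y)*(w-g*(1-w-g))) * ((x-z)*(z-y)))^2
        + 4*(w*(g*((1-w-g)*((x-z)^2*((z-y)^2*(x-y)^2))))) := by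
    have h3 : 0 < (x-z)^2 := pow_pos hp 2
    have h4 : 0 < (z-y)^2 := pow_pos hq 2
    have h5 : 0 < (x-y)^2 := pow_pos hxy 2
    have h6 : 0 < 4*(w*(g*((1-w-g)*((x-z)^2*((z-y)^2*(x-y)^2))))) := by positivity
    linarith [h6, sq_nonneg ((((x-z)*(1-w)-(z-y)*(1-g))^2 + 4*((x-z)*((z-y)*(1-w-g)))) * z
          + ((x-z)*(w*(1-w-g)-g) + (z-y)*(w-g*(1-w-g))) * ((x-z)*(z-y)))]
  have hLT : 0 < (((x-z)*(1-w)-(z-y)*(1-g))^2 + 4*((x-z)*((z-y)*(1-w-g)))) *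
      ((x*y*(g-w) + z*(x-y) + z*(w*y-g*x))^2 + 4*w*g*x*y*(x-z)*(y-z)) := by
    rw [key]; exact hR
  rcases mul_pos_iff.mp hLT with ⟨_, h⟩ | ⟨h, _⟩
  · exact h
  · linarith

set_option maxHeartbeats 1600000 in
/-- The key algebraic lemma: vanishing locus of the discriminant numerator. -/
lemma Tzero (μw μg μo w g : ℝ) (hμw : 0 < μw) (hμg : 0 < μg) (hμo : 0 < μo)
    (hw : 0 ≤ w) (hg : 0 ≤ g) (hs : w + g ≤ 1) :
    ((w/μw)*(g/μg)*(g-w) + ((1-w-g)/μo)*((w/μw)-(g/μg))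
        + ((1-w-g)/μo)*(w*(g/μg)-g*(w/μw)))^2
      + 4*w*g*(w/μw)*(g/μg)*((w/μw)-((1-w-g)/μo))*((g/μg)-((1-w-g)/μo)) = 0
    ↔ ((w = 0 ∧ g = 1) ∨ (w = 1 ∧ g = 0) ∨ (w = 0 ∧ g = 0) ∨
        (w = μw/(μw+μg+μo) ∧ g = μg/(μw+μg+μo))) := by
  have hμw' := hμw.ne'
  have hμg' := hμg.ne'
  have hμo' := hμo.ne'
  have hS : (0:ℝ) < μw + μg + μo := by linarith
  constructor
  · intro hT
    by_cases hw0 : w = 0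
    · subst hw0
      have hT' : (((1-0-g)/μo)*(g/μg))^2 = 0 := by
        rw [show (((1-0-g)/μo)*(g/μg))^2
          = ((0/μw)*(g/μg)*(g-0) + ((1-0-g)/μo)*((0/μw)-(g/μg))
            + ((1-0-g)/μo)*(0*(g/μg)-g*(0/μw)))^2
          + 4*0*g*(0/μw)*(g/μg)*((0/μw)-((1-0-g)/μo))*((g/μg)-((1-0-g)/μo)) from by ring]
        exact hT
      have h2 : ((1-0-g)/μo)*(g/μg) = 0 := by
        exact pow_eq_zero_iff (n := 2) (by norm_num) |>.mp hT'
      rcases mul_eq_zero.mp h2 with h3 | h3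
      · left
        constructor
        · rfl
        · have : 1 - 0 - g = 0 := by
            field_simp at h3; linarith
          linarith
      · right; right; left
        have : g = 0 := by exact (_root_.div_eq_zero_iff.mp h3).resolve_right hμg'
        exact ⟨rfl, this⟩
    · by_cases hg0 : g = 0
      · subst hg0
        have hT' : (((1-w-0)/μo)*(w/μw))^2 = 0 := by
          rw [show (((1-w-0)/μo)*(w/μw))^2
            = ((w/μw)*(0/μg)*(0-w) + ((1-w-0)/μo)*((w/μw)-(0/μg))
              + ((1-w-0)/μo)*(w*(0/μg)-0*(w/μw)))^2
            + 4*w*0*(w/μw)*(0/μg)*((w/μw)-((1-w-0)/μo))*((0/μg)-((1-w-0)/μo)) from by ring]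
          exact hT
        have h2 : ((1-w-0)/μo)*(w/μw) = 0 := by
          exact pow_eq_zero_iff (n := 2) (by norm_num) |>.mp hT'
        rcases mul_eq_zero.mp h2 with h3 | h3
        · right; left
          have : 1 - w - 0 = 0 := by field_simp at h3; linarith
          exact ⟨by linarith, rfl⟩
        · exact absurd ((_root_.div_eq_zero_iff.mp h3).resolve_right hμw') hw0
      · have hwpos : 0 < w := lt_of_le_of_ne hw (Ne.symm hw0)
        have hgpos : 0 < g := lt_of_le_of_ne hg (Ne.symm hg0)
        by_cases ho0 : 1 - w - g = 0
        · exfalso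
          have hg1 : g = 1 - w := by linarith
          subst hg1
          have hpos : 0 < (w/μw * ((1-w)/μg))^2 := by
            have h1w : 0 < 1 - w := hgpos
            positivity
          have heq : ((w/μw)*((1-w)/μg)*((1-w)-w) + ((1-w-(1-w))/μo)*((w/μw)-((1-w)/μg))
              + ((1-w-(1-w))/μo)*(w*((1-w)/μg)-(1-w)*(w/μw)))^2
            + 4*w*(1-w)*(w/μw)*((1-w)/μg)*((w/μw)-((1-w-(1-w))/μo))*(((1-w)/μg)-((1-w-(1-w))/μo))
              = (w/μw * ((1-w)/μg))^2 := by ring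
          rw [heq] at hT
          linarith
        · have hopos : 0 < 1 - w - g := lt_of_le_of_ne (by linarith) (Ne.symm ho0)
          have hx : 0 < w/μw := by positivity
          have hy : 0 < g/μg := by positivity
          have hz : 0 < (1-w-g)/μo := by positivity
          by_cases hxz : (w/μw) = ((1-w-g)/μo)
          · -- x = z, so P1 = x (x - y)(1-g) and second term vanishes
            rw [← hxz] at hT
            have heq : ((w/μw)*(g/μg)*(g-w) + (w/μw)*((w/μw)-(g/μg))
                + (w/μw)*(w*(g/μg)-g*(w/μw)))^2
                + 4*w*g*(w/μw)*(g/μg)*((w/μw)-(w/μw))*((g/μg)-(w/μw))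
                = ((w/μw)*((w/μw)-(g/μg))*(1-g))^2 := by ring
            rw [heq] at hT
            have h2 : (w/μw)*((w/μw)-(g/μg))*(1-g) = 0 :=
              pow_eq_zero_iff (n := 2) (by norm_num) |>.mp hT
            have h1g : (0:ℝ) < 1 - g := by linarith
            have hxy : (w/μw) - (g/μg) = 0 := by
              rcases mul_eq_zero.mp h2 with h3 | h3
              · rcases mul_eq_zero.mp h3 with h4 | h4
                · exact absurd h4 hx.ne'
                · exact h4
              · exact absurd h3 h1g.ne'
            have hxy' : (w/μw) = (g/μg) := by linarith
            -- now x = y = z: solve for w, g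
            right; right; right
            have e1 : w*μg = g*μw := (div_eq_div_iff hμw' hμg').mp hxy'
            have e2 : w*μo = (1-w-g)*μw := (div_eq_div_iff hμw' hμo').mp hxz
            have e1s : g*μw = w*μg := e1.symm
            have e2s : g*μo = (1-w-g)*μg := by
              have hyz : (g/μg) = ((1-w-g)/μo) := by rw [← hxy']; exact hxz
              exact (div_eq_div_iff hμg' hμo').mp hyz
            constructor
            · rw [eq_div_iff hS.ne']
              linear_combination e1 + e2
            · rw [eq_div_iff hS.ne']
              linear_combination e1s + e2s
          · by_cases hyz : (g/μg) = ((1-w-g)/μo)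
            · exfalso
              rw [← hyz] at hT
              have heq : ((w/μw)*(g/μg)*(g-w) + (g/μg)*((w/μw)-(g/μg))
                  + (g/μg)*(w*(g/μg)-g*(w/μw)))^2
                  + 4*w*g*(w/μw)*(g/μg)*((w/μw)-(g/μg))*((g/μg)-(g/μg))
                  = ((g/μg)*((g/μg)-(w/μw))*(1-w))^2 := by ring
              rw [heq] at hT
              have h2 : (g/μg)*((g/μg)-(w/μw))*(1-w) = 0 :=
                pow_eq_zero_iff (n := 2) (by norm_num) |>.mp hT
              have h1w : (0:ℝ) < 1 - w := by linarith
              have hxy : (g/μg) - (w/μw) = 0 := by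
                rcases mul_eq_zero.mp h2 with h3 | h3
                · rcases mul_eq_zero.mp h3 with h4 | h4
                  · exact absurd h4 hy.ne'
                  · exact h4
                · exact absurd h3 h1w.ne'
              apply hxz
              rw [← hyz]
              linarith
            · -- x ≠ z and y ≠ z
              exfalso
              rcases lt_or_gt_of_ne hxz with hx1 | hx1 <;>
                rcases lt_or_gt_of_ne hyz with hy1 | hy1
              · -- x < z, y < z : product positive
                have hprod : 0 < 4*w*g*(w/μw)*(g/μg)*((w/μw)-((1-w-g)/μo))*((g/μg)-((1-w-g)/μo)) := by
                  have p1 : 0 < ((1-w-g)/μo) - (w/μw) := by linarith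
                  have p2 : 0 < ((1-w-g)/μo) - (g/μg) := by linarith
                  have : 0 < 4*w*g*(w/μw)*(g/μg)*(((1-w-g)/μo)-(w/μw))*(((1-w-g)/μo)-(g/μg)) := by
                    positivity
                  nlinarith [this]
                nlinarith [sq_nonneg ((w/μw)*(g/μg)*(g-w) + ((1-w-g)/μo)*((w/μw)-(g/μg))
                  + ((1-w-g)/μo)*(w*(g/μg)-g*(w/μw)))]
              · -- x < z, y > z : apply auxPos with roles swapped
                have := auxPos g w (g/μg) (w/μw) ((1-w-g)/μo) hgpos hwpos
                  (by linarith) hx1 hy1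
                nlinarith [this]
              · -- x > z, y < z : auxPos directly
                have := auxPos w g (w/μw) (g/μg) ((1-w-g)/μo) hwpos hgpos hopos hy1 hx1
                nlinarith [this]
              · -- x > z, y > z : product positive
                have hprod : 0 < 4*w*g*(w/μw)*(g/μg)*((w/μw)-((1-w-g)/μo))*((g/μg)-((1-w-g)/μo)) := by
                  have p1 : 0 < (w/μw) - ((1-w-g)/μo) := by linarith
                  have p2 : 0 < (g/μg) - ((1-w-g)/μo) := by linarith
                  positivity
                nlinarith [sq_nonneg ((w/μw)*(g/μg)*(g-w) + ((1-w-g)/μo)*((w/μw)-(g/μg))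
                  + ((1-w-g)/μo)*(w*(g/μg)-g*(w/μw)))]
  · rintro (⟨h1, h2⟩ | ⟨h1, h2⟩ | ⟨h1, h2⟩ | ⟨h1, h2⟩) <;> subst h1 <;> subst h2
    · norm_num
    · norm_num
    · norm_num
    · field_simp
      ring

set_option maxHeartbeats 2000000 in
/-- the discriminant of the Jacobian vanishes on the saturation triangle
exactly at the vertices `G`, `W`, `O` and at the umbilic point `U`. -/
theorem discriminant_eq_zero_iff (μw μg μo : ℝ) (hw : 0 < μw) (hg : 0 < μg) (ho : 0 < μo) :
    ∀ u ∈ satTriangle,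
      ((jac μw μg μo u).trace ^ 2 - 4 * (jac μw μg μo u).det = 0 ↔
        u = ((0 : ℝ), (1 : ℝ)) ∨ u = ((1 : ℝ), (0 : ℝ)) ∨ u = ((0 : ℝ), (0 : ℝ)) ∨
          u = (μw / (μw + μg + μo), μg / (μw + μg + μo))) := by
  rintro u ⟨hu1, hu2, hu3⟩
  have hD : 0 < Dfun μw μg μo u := by
    have hcase : u.1 ≠ 0 ∨ u.2 ≠ 0 ∨ so u ≠ 0 := by
      by_contra h
      push_neg at h
      obtain ⟨a, b, c⟩ := h
      rw [so, a, b] at c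
      norm_num at c
    have t1 : 0 ≤ u.1 ^ 2 / μw := by positivity
    have t2 : 0 ≤ u.2 ^ 2 / μg := by positivity
    have t3 : 0 ≤ so u ^ 2 / μo := by positivity
    rcases hcase with h | h | h
    · have h1 : 0 < u.1 ^ 2 := lt_of_le_of_ne (sq_nonneg u.1) (Ne.symm (pow_ne_zero 2 h))
      have : 0 < u.1 ^ 2 / μw := div_pos h1 hw
      rw [Dfun]; linarith
    · have h1 : 0 < u.2 ^ 2 := lt_of_le_of_ne (sq_nonneg u.2) (Ne.symm (pow_ne_zero 2 h))
      have : 0 < u.2 ^ 2 / μg := div_pos h1 hg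
      rw [Dfun]; linarith
    · have h1 : 0 < so u ^ 2 := lt_of_le_of_ne (sq_nonneg (so u)) (Ne.symm (pow_ne_zero 2 h))
      have : 0 < so u ^ 2 / μo := div_pos h1 ho
      rw [Dfun]; linarith
  have hD' : Dfun μw μg μo u ≠ 0 := hD.ne'
  simp only [jac, Matrix.trace_fin_two_of, Matrix.det_fin_two_of]
  rw [fw_deriv1 μw μg μo u hw.ne' hD', fw_deriv2 μw μg μo u hw.ne' hD',
    fg_deriv1 μw μg μo u hg.ne' hD', fg_deriv2 μw μg μo u hg.ne' hD']
  have hDex : u.1 ^ 2 / μw + u.2 ^ 2 / μg + (1 - u.1 - u.2) ^ 2 / μo ≠ 0 := by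
    rw [Dfun, so] at hD'
    exact hD'
  have keyA : ((2 * u.1 * Dfun μw μg μo u - u.1 ^ 2 * (2 * u.1 / μw - 2 * so u / μo))
          / (μw * Dfun μw μg μo u ^ 2)
        + (2 * u.2 * Dfun μw μg μo u - u.2 ^ 2 * (2 * u.2 / μg - 2 * so u / μo))
          / (μg * Dfun μw μg μo u ^ 2)) ^ 2
      - 4 * ((2 * u.1 * Dfun μw μg μo u - u.1 ^ 2 * (2 * u.1 / μw - 2 * so u / μo))
          / (μw * Dfun μw μg μo u ^ 2)
        * ((2 * u.2 * Dfun μw μg μo u - u.2 ^ 2 * (2 * u.2 / μg - 2 * so u / μo))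
          / (μg * Dfun μw μg μo u ^ 2))
        - (- u.1 ^ 2 * (2 * u.2 / μg - 2 * so u / μo)) / (μw * Dfun μw μg μo u ^ 2)
          * ((- u.2 ^ 2 * (2 * u.1 / μw - 2 * so u / μo)) / (μg * Dfun μw μg μo u ^ 2)))
      = ((μg * (2 * u.1 * Dfun μw μg μo u - u.1 ^ 2 * (2 * u.1 / μw - 2 * so u / μo))
            - μw * (2 * u.2 * Dfun μw μg μo u - u.2 ^ 2 * (2 * u.2 / μg - 2 * so u / μo))) ^ 2
          + 4 * μw * μg * ((- u.1 ^ 2 * (2 * u.2 / μg - 2 * so u / μo))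
            * (- u.2 ^ 2 * (2 * u.1 / μw - 2 * so u / μo))))
        / ((μw * μg) ^ 2 * Dfun μw μg μo u ^ 4) := by
    field_simp
    ring
  rw [keyA]
  have keyB : (μg * (2 * u.1 * Dfun μw μg μo u - u.1 ^ 2 * (2 * u.1 / μw - 2 * so u / μo))
            - μw * (2 * u.2 * Dfun μw μg μo u - u.2 ^ 2 * (2 * u.2 / μg - 2 * so u / μo))) ^ 2
          + 4 * μw * μg * ((- u.1 ^ 2 * (2 * u.2 / μg - 2 * so u / μo))
            * (- u.2 ^ 2 * (2 * u.1 / μw - 2 * so u / μo)))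
      = 4 * (((u.1/μw)*(u.2/μg)*(u.2-u.1) + ((1-u.1-u.2)/μo)*((u.1/μw)-(u.2/μg))
            + ((1-u.1-u.2)/μo)*(u.1*(u.2/μg)-u.2*(u.1/μw)))^2
          + 4*u.1*u.2*(u.1/μw)*(u.2/μg)*((u.1/μw)-((1-u.1-u.2)/μo))*((u.2/μg)-((1-u.1-u.2)/μo)))
        * (μw * μg) ^ 2 := by
    rw [Dfun, so]
    field_simp
    ring
  rw [keyB, Dfun, so]
  have hcc : ((μw * μg) ^ 2 : ℝ) ≠ 0 := by positivity
  rw [show (4 * (((u.1/μw)*(u.2/μg)*(u.2-u.1) + ((1-u.1-u.2)/μo)*((u.1/μw)-(u.2/μg))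
            + ((1-u.1-u.2)/μo)*(u.1*(u.2/μg)-u.2*(u.1/μw)))^2
          + 4*u.1*u.2*(u.1/μw)*(u.2/μg)*((u.1/μw)-((1-u.1-u.2)/μo))*((u.2/μg)-((1-u.1-u.2)/μo)))
        * (μw * μg) ^ 2)
      / ((μw * μg) ^ 2 * (u.1 ^ 2 / μw + u.2 ^ 2 / μg + (1 - u.1 - u.2) ^ 2 / μo) ^ 4)
    = (4 * (((u.1/μw)*(u.2/μg)*(u.2-u.1) + ((1-u.1-u.2)/μo)*((u.1/μw)-(u.2/μg))
            + ((1-u.1-u.2)/μo)*(u.1*(u.2/μg)-u.2*(u.1/μw)))^2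
          + 4*u.1*u.2*(u.1/μw)*(u.2/μg)*((u.1/μw)-((1-u.1-u.2)/μo))*((u.2/μg)-((1-u.1-u.2)/μo))))
      / ((u.1 ^ 2 / μw + u.2 ^ 2 / μg + (1 - u.1 - u.2) ^ 2 / μo) ^ 4) from by
      rw [mul_comm ((μw * μg) ^ 2) ((u.1 ^ 2 / μw + u.2 ^ 2 / μg + (1 - u.1 - u.2) ^ 2 / μo) ^ 4)]
      exact mul_div_mul_right _ _ hcc]
  rw [_root_.div_eq_zero_iff, or_iff_left (pow_ne_zero 4 hDex), mul_eq_zero,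
    or_iff_right (by norm_num : (4:ℝ) ≠ 0),
    Tzero μw μg μo u.1 u.2 hw hg ho hu1 hu2 hu3]
  simp only [Prod.ext_iff]
end ThreePhaseFlow
end

section
/- At the umbilic point U = (μ_w/μ_tot, μ_g/μ_tot) one has F(U) = U, and the Jacobian of the flux map satisfies J(U) = 2·I₂ (twice the 2×2 identity matrix); in particular both characteristic speeds at U coincide and are equal to 2. -/
open Matrix Polynomial

noncomputable section ThreePhaseFlow

set_option maxHeartbeats 1600000 in
/-- at the umbilic point `U` we have `F(U) = U` and `J(U) = 2 I`; in
particular both characteristic speeds at `U` coincide and equal `2`. -/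
theorem umbilic_point_properties (μw μg μo : ℝ) (hw : 0 < μw) (hg : 0 < μg) (ho : 0 < μo) :
    flux μw μg μo (μw / (μw + μg + μo), μg / (μw + μg + μo)) =
      (μw / (μw + μg + μo), μg / (μw + μg + μo)) ∧
    jac μw μg μo (μw / (μw + μg + μo), μg / (μw + μg + μo)) =
      (2 : ℝ) • (1 : Matrix (Fin 2) (Fin 2) ℝ) ∧
    (∀ (lam : ℝ) (v : Fin 2 → ℝ), v ≠ 0 →
      (jac μw μg μo (μw / (μw + μg + μo), μg / (μw + μg + μo))).mulVec v = lam • v →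
      lam = 2) := by
  have hT : μw + μg + μo ≠ 0 := by positivity
  set T := μw + μg + μo with hTdef
  set Upt : ℝ × ℝ := (μw / T, μg / T) with hU
  have hso : so Upt = μo / T := by
    simp only [so, hU]; field_simp; ring
  have hDval : Dfun μw μg μo Upt = 1 / T := by
    simp only [Dfun, hso]; simp only [hU]; field_simp; ring
  have h1 : HasFDerivAt (fun u : ℝ × ℝ => u.1) (ContinuousLinearMap.fst ℝ ℝ ℝ) Upt :=
    hasFDerivAt_fst
  have h2 : HasFDerivAt (fun u : ℝ × ℝ => u.2) (ContinuousLinearMap.snd ℝ ℝ ℝ) Upt :=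
    hasFDerivAt_snd
  have hso' : HasFDerivAt so
      (0 - ContinuousLinearMap.fst ℝ ℝ ℝ - ContinuousLinearMap.snd ℝ ℝ ℝ) Upt := by
    exact ((hasFDerivAt_const (1:ℝ) Upt).sub h1).sub h2
  have hDeq : Dfun μw μg μo
      = fun u : ℝ × ℝ => u.1*u.1*μw⁻¹ + u.2*u.2*μg⁻¹ + so u*so u*μo⁻¹ := by
    funext u; simp [Dfun, pow_two, div_eq_mul_inv]
  have hD := ((((h1.mul h1).mul_const μw⁻¹).add ((h2.mul h2).mul_const μg⁻¹)).add
      (((hso'.mul hso').mul_const μo⁻¹)))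
  replace hD : HasFDerivAt (fun u : ℝ × ℝ => u.1*u.1*μw⁻¹ + u.2*u.2*μg⁻¹ + so u*so u*μo⁻¹) _ Upt := hD
  rw [← hDeq] at hD
  -- water fractional flow derivative
  have hne : μw * Dfun μw μg μo Upt ≠ 0 := by rw [hDval]; positivity
  have hden := hD.const_mul μw
  have hinv := (hasFDerivAt_inv' (𝕜 := ℝ) hne).comp Upt hden
  have hfw := (h1.mul h1).mul hinv
  simp only [Function.comp] at hfw
  have hfweq : fw μw μg μo = fun u : ℝ × ℝ => u.1*u.1 * (μw * Dfun μw μg μo u)⁻¹ := by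
    funext u; simp [fw, pow_two, div_eq_mul_inv]
  replace hfw : HasFDerivAt (fun u : ℝ × ℝ => u.1*u.1 * (μw * Dfun μw μg μo u)⁻¹) _ Upt := hfw
  rw [← hfweq] at hfw
  -- gas fractional flow derivative
  have hneg : μg * Dfun μw μg μo Upt ≠ 0 := by rw [hDval]; positivity
  have hdeng := hD.const_mul μg
  have hinvg := (hasFDerivAt_inv' (𝕜 := ℝ) hneg).comp Upt hdeng
  have hfg := (h2.mul h2).mul hinvg
  simp only [Function.comp] at hfg
  have hfgeq : fg μw μg μo = fun u : ℝ × ℝ => u.2*u.2 * (μg * Dfun μw μg μo u)⁻¹ := by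
    funext u; simp [fg, pow_two, div_eq_mul_inv]
  replace hfg : HasFDerivAt (fun u : ℝ × ℝ => u.2*u.2 * (μg * Dfun μw μg μo u)⁻¹) _ Upt := hfg
  rw [← hfgeq] at hfg
  -- entries of the Jacobian
  have e11 : fderiv ℝ (fw μw μg μo) Upt (1, 0) = 2 := by
    rw [hfw.fderiv]
    simp only [hDval, hso]
    simp [hDval, hso, hU, ContinuousLinearMap.mulLeftRight_apply]
    field_simp
    ring
  have e12 : fderiv ℝ (fw μw μg μo) Upt (0, 1) = 0 := by
    rw [hfw.fderiv]
    simp only [hDval, hso]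
    simp [hDval, hso, hU, ContinuousLinearMap.mulLeftRight_apply]
    field_simp
    ring
  have e21 : fderiv ℝ (fg μw μg μo) Upt (1, 0) = 0 := by
    rw [hfg.fderiv]
    simp only [hDval, hso]
    simp [hDval, hso, hU, ContinuousLinearMap.mulLeftRight_apply]
    field_simp
    ring
  have e22 : fderiv ℝ (fg μw μg μo) Upt (0, 1) = 2 := by
    rw [hfg.fderiv]
    simp only [hDval, hso]
    simp [hDval, hso, hU, ContinuousLinearMap.mulLeftRight_apply]
    field_simp
    ring
  have hjac : jac μw μg μo Upt = (2 : ℝ) • (1 : Matrix (Fin 2) (Fin 2) ℝ) := by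
    ext i j
    fin_cases i <;> fin_cases j <;>
      simp [jac, e11, e12, e21, e22, Matrix.one_apply]
  refine ⟨?_, hjac, ?_⟩
  · have hfwval : fw μw μg μo Upt = μw / T := by
      simp only [fw, hDval]; simp only [hU]
      field_simp
    have hfgval : fg μw μg μo Upt = μg / T := by
      simp only [fg, hDval]; simp only [hU]
      field_simp
    rw [flux, hfwval, hfgval, hU]
  · intro lam v hv0 hmv
    rw [hjac] at hmv
    have hmv' : (2 : ℝ) • v = lam • v := by
      rw [← hmv, Matrix.smul_mulVec, Matrix.one_mulVec]
    obtain ⟨i, hi⟩ := Function.ne_iff.mp hv0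
    have := congrFun hmv' i
    simp only [Pi.smul_apply, smul_eq_mul] at this
    have : 2 * v i = lam * v i := this
    exact (mul_right_cancel₀ hi this.symm)
end ThreePhaseFlow
end

section
/- For every state u on the boundary of the saturation triangle Δ (i.e., with s_w = 0, or s_g = 0, or s_w + s_g = 1), the determinant of the Jacobian of the flux map vanishes: det J(u) = 0. Hence the slow characteristic speed is zero on the edges of Δ. -/
open Matrix Polynomial

noncomputable section ThreePhaseFlow

lemma Dfun_pos {μw μg μo : ℝ} (hw : 0 < μw) (hg : 0 < μg) (ho : 0 < μo) (u : ℝ × ℝ) :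
    0 < Dfun μw μg μo u := by
  unfold Dfun so
  rcases eq_or_ne u.1 0 with h1 | h1
  · rcases eq_or_ne u.2 0 with h2 | h2
    · rw [h1, h2]; norm_num; positivity
    · have a : 0 < u.2 ^ 2 / μg := by positivity
      have b : 0 ≤ u.1 ^ 2 / μw := by positivity
      have c : 0 ≤ (1 - u.1 - u.2) ^ 2 / μo := by positivity
      linarith
  · have a : 0 < u.1 ^ 2 / μw := by positivity
    have b : 0 ≤ u.2 ^ 2 / μg := by positivity
    have c : 0 ≤ (1 - u.1 - u.2) ^ 2 / μo := by positivity
    linarith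

lemma Dfun_diff (μw μg μo : ℝ) : Differentiable ℝ (Dfun μw μg μo) := by
  unfold Dfun so; fun_prop

lemma so_diff : Differentiable ℝ so := by unfold so; fun_prop

lemma fderiv_mul_eq_zero {c d : ℝ × ℝ → ℝ} {u : ℝ × ℝ} (hc0 : c u = 0)
    (hc : HasFDerivAt c (0 : ℝ × ℝ →L[ℝ] ℝ) u) (hd : DifferentiableAt ℝ d u) :
    fderiv ℝ (fun x => c x * d x) u = 0 := by
  have h := hc.mul hd.hasFDerivAt
  rw [hc0] at h
  have h2 : fderiv ℝ (c * d) u = 0 := by simpa using h.fderiv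
  exact h2

/-- If a differentiable scalar function vanishes at `u`, its square has zero derivative there. -/
lemma hasFDerivAt_sq_zero {c : ℝ × ℝ → ℝ} {u : ℝ × ℝ} (hc0 : c u = 0)
    (hc : DifferentiableAt ℝ c u) :
    HasFDerivAt (fun x => c x ^ 2) (0 : ℝ × ℝ →L[ℝ] ℝ) u := by
  have h := hc.hasFDerivAt.mul hc.hasFDerivAt
  rw [hc0] at h
  simp only [zero_smul, zero_add, smul_zero, add_zero] at h
  have heq : (fun x => c x * c x) = fun x => c x ^ 2 := by
    funext x; ring
  rw [← heq]; exact h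

/-- on the boundary of the saturation triangle the determinant of the
Jacobian vanishes, so the slow characteristic speed is zero on the edges. -/
theorem det_jac_zero_on_boundary (μw μg μo : ℝ) (hw : 0 < μw) (hg : 0 < μg) (ho : 0 < μo) :
    ∀ u ∈ satTriangle, (u.1 = 0 ∨ u.2 = 0 ∨ u.1 + u.2 = 1) →
      (jac μw μg μo u).det = 0 := by
  intro u _ hb
  have hDpos := Dfun_pos hw hg ho
  have hDne : ∀ v, Dfun μw μg μo v ≠ 0 := fun v => (hDpos v).ne'
  have hDd := Dfun_diff μw μg μo
  have hinvw : DifferentiableAt ℝ (fun x => (μw * Dfun μw μg μo x)⁻¹) u :=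
    ((differentiableAt_const μw).mul (hDd u)).inv (mul_ne_zero hw.ne' (hDne u))
  have hinvg : DifferentiableAt ℝ (fun x => (μg * Dfun μw μg μo x)⁻¹) u :=
    ((differentiableAt_const μg).mul (hDd u)).inv (mul_ne_zero hg.ne' (hDne u))
  have hinvo : DifferentiableAt ℝ (fun x => (μo * Dfun μw μg μo x)⁻¹) u :=
    ((differentiableAt_const μo).mul (hDd u)).inv (mul_ne_zero ho.ne' (hDne u))
  have hfw_eq : fw μw μg μo = fun x => x.1 ^ 2 * (μw * Dfun μw μg μo x)⁻¹ := by
    funext x; simp [fw, div_eq_mul_inv]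
  have hfg_eq : fg μw μg μo = fun x => x.2 ^ 2 * (μg * Dfun μw μg μo x)⁻¹ := by
    funext x; simp [fg, div_eq_mul_inv]
  have hfo_eq : fo μw μg μo = fun x => so x ^ 2 * (μo * Dfun μw μg μo x)⁻¹ := by
    funext x; simp [fo, div_eq_mul_inv]
  rcases hb with h | h | h
  · -- s_w = 0 : first row vanishes
    have hc : HasFDerivAt (fun x : ℝ × ℝ => x.1 ^ 2) (0 : ℝ × ℝ →L[ℝ] ℝ) u :=
      hasFDerivAt_sq_zero h differentiableAt_fst
    have hfw : fderiv ℝ (fw μw μg μo) u = 0 := by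
      rw [hfw_eq]
      exact fderiv_mul_eq_zero (by simp [h]) hc hinvw
    simp [jac, Matrix.det_fin_two_of, hfw]
  · -- s_g = 0 : second row vanishes
    have hc : HasFDerivAt (fun x : ℝ × ℝ => x.2 ^ 2) (0 : ℝ × ℝ →L[ℝ] ℝ) u :=
      hasFDerivAt_sq_zero h differentiableAt_snd
    have hfg : fderiv ℝ (fg μw μg μo) u = 0 := by
      rw [hfg_eq]
      exact fderiv_mul_eq_zero (by simp [h]) hc hinvg
    simp [jac, Matrix.det_fin_two_of, hfg]
  · -- s_w + s_g = 1 : rows sum to zero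
    have hso : so u = 0 := by simp only [so]; linarith
    have hc : HasFDerivAt (fun x : ℝ × ℝ => so x ^ 2) (0 : ℝ × ℝ →L[ℝ] ℝ) u :=
      hasFDerivAt_sq_zero hso (so_diff u)
    have hfo : fderiv ℝ (fo μw μg μo) u = 0 := by
      rw [hfo_eq]
      exact fderiv_mul_eq_zero (by simp [hso]) hc hinvo
    have hdfw : DifferentiableAt ℝ (fw μw μg μo) u := by
      rw [hfw_eq]; exact (differentiableAt_fst.pow 2).mul hinvw
    have hdfg : DifferentiableAt ℝ (fg μw μg μo) u := by
      rw [hfg_eq]; exact (differentiableAt_snd.pow 2).mul hinvg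
    have hdfo : DifferentiableAt ℝ (fo μw μg μo) u := by
      rw [hfo_eq]; exact ((so_diff u).pow 2).mul hinvo
    have hone : (fun x => fw μw μg μo x + fg μw μg μo x + fo μw μg μo x)
        = fun _ : ℝ × ℝ => (1 : ℝ) := by
      funext x
      show x.1 ^ 2 / (μw * Dfun μw μg μo x) + x.2 ^ 2 / (μg * Dfun μw μg μo x)
          + so x ^ 2 / (μo * Dfun μw μg μo x) = 1
      rw [← div_div, ← div_div, ← div_div, ← add_div, ← add_div]
      rw [show x.1 ^ 2 / μw + x.2 ^ 2 / μg + so x ^ 2 / μo = Dfun μw μg μo x from rfl,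
        div_self (hDne x)]
    have hsum : fderiv ℝ (fw μw μg μo) u + fderiv ℝ (fg μw μg μo) u
        + fderiv ℝ (fo μw μg μo) u = 0 := by
      have h1 : fderiv ℝ (fun x => fw μw μg μo x + fg μw μg μo x + fo μw μg μo x) u
          = fderiv ℝ (fw μw μg μo) u + fderiv ℝ (fg μw μg μo) u + fderiv ℝ (fo μw μg μo) u := by
        rw [fderiv_fun_add (f := fun x => fw μw μg μo x + fg μw μg μo x) (hdfw.add hdfg) hdfo, fderiv_fun_add hdfw hdfg]
      rw [← h1, hone]
      simp
    rw [hfo, add_zero] at hsum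
    have hAB : fderiv ℝ (fw μw μg μo) u = -(fderiv ℝ (fg μw μg μo) u) :=
      eq_neg_of_add_eq_zero_left hsum
    simp only [jac, Matrix.det_fin_two_of, hAB, ContinuousLinearMap.neg_apply]
    ring
end ThreePhaseFlow
end

section
/- For every state u on the boundary of the saturation triangle Δ that is not one of the vertices G = (0,1), W = (1,0), O = (0,0), the trace of the Jacobian of the flux map is strictly positive: tr J(u) > 0. Combined with det J(u) = 0 on the boundary, the eigenvalues of J(u) at such u are 0 and tr J(u) > 0; that is, the fast characteristic speed is positive on the edges except at the vertices. -/
open Matrix Polynomial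

noncomputable section ThreePhaseFlow

lemma fderiv_dir1 {f : ℝ × ℝ → ℝ} {u : ℝ × ℝ} {d : ℝ}
    (hf : DifferentiableAt ℝ f u)
    (h : HasDerivAt (fun t : ℝ => f (u.1 + t, u.2)) d 0) :
    fderiv ℝ f u (1, 0) = d := by
  have ha : HasDerivAt (fun t : ℝ => u.1 + t) 1 0 := (hasDerivAt_id 0).const_add u.1
  have hb : HasDerivAt (fun _ : ℝ => u.2) 0 0 := hasDerivAt_const 0 u.2
  have h1 : HasDerivAt (fun t : ℝ => ((u.1 + t, u.2) : ℝ × ℝ)) ((1, 0) : ℝ × ℝ) 0 :=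
    ha.prodMk hb
  have h2 : HasFDerivAt f (fderiv ℝ f u) ((fun t : ℝ => ((u.1 + t, u.2) : ℝ × ℝ)) 0) := by
    simpa using hf.hasFDerivAt
  have h3 := h2.comp_hasDerivAt 0 h1
  exact (h3.unique h)

lemma fderiv_dir2 {f : ℝ × ℝ → ℝ} {u : ℝ × ℝ} {d : ℝ}
    (hf : DifferentiableAt ℝ f u)
    (h : HasDerivAt (fun t : ℝ => f (u.1, u.2 + t)) d 0) :
    fderiv ℝ f u (0, 1) = d := by
  have ha : HasDerivAt (fun _ : ℝ => u.1) 0 0 := hasDerivAt_const 0 u.1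
  have hb : HasDerivAt (fun t : ℝ => u.2 + t) 1 0 := (hasDerivAt_id 0).const_add u.2
  have h1 : HasDerivAt (fun t : ℝ => ((u.1, u.2 + t) : ℝ × ℝ)) ((0, 1) : ℝ × ℝ) 0 :=
    ha.prodMk hb
  have h2 : HasFDerivAt f (fderiv ℝ f u) ((fun t : ℝ => ((u.1, u.2 + t) : ℝ × ℝ)) 0) := by
    simpa using hf.hasFDerivAt
  have h3 := h2.comp_hasDerivAt 0 h1
  exact (h3.unique h)

lemma diff_Dfun {μw μg μo : ℝ} (u : ℝ × ℝ) :
    DifferentiableAt ℝ (Dfun μw μg μo) u := by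
  unfold Dfun so
  fun_prop

lemma diff_fw {μw μg μo : ℝ} (hw : 0 < μw) (hg : 0 < μg) (ho : 0 < μo) (u : ℝ × ℝ) :
    DifferentiableAt ℝ (fw μw μg μo) u := by
  have hD := Dfun_pos hw hg ho u
  have hne : μw * Dfun μw μg μo u ≠ 0 := by positivity
  have h1 : DifferentiableAt ℝ (fun v : ℝ × ℝ => v.1 ^ 2) u := by fun_prop
  have h2 : DifferentiableAt ℝ (fun v : ℝ × ℝ => μw * Dfun μw μg μo v) u :=
    (differentiableAt_const μw).mul (diff_Dfun u)
  have heq : fw μw μg μo = fun v : ℝ × ℝ => v.1 ^ 2 * (μw * Dfun μw μg μo v)⁻¹ := by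
    funext v; rw [fw, div_eq_mul_inv]
  rw [heq]
  exact h1.mul (h2.inv hne)

lemma diff_fg {μw μg μo : ℝ} (hw : 0 < μw) (hg : 0 < μg) (ho : 0 < μo) (u : ℝ × ℝ) :
    DifferentiableAt ℝ (fg μw μg μo) u := by
  have hD := Dfun_pos hw hg ho u
  have hne : μg * Dfun μw μg μo u ≠ 0 := by positivity
  have h1 : DifferentiableAt ℝ (fun v : ℝ × ℝ => v.2 ^ 2) u := by fun_prop
  have h2 : DifferentiableAt ℝ (fun v : ℝ × ℝ => μg * Dfun μw μg μo v) u :=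
    (differentiableAt_const μg).mul (diff_Dfun u)
  have heq : fg μw μg μo = fun v : ℝ × ℝ => v.2 ^ 2 * (μg * Dfun μw μg μo v)⁻¹ := by
    funext v; rw [fg, div_eq_mul_inv]
  rw [heq]
  exact h1.mul (h2.inv hne)

set_option maxHeartbeats 1600000 in
/-- Scalar derivative of `fw` along the first coordinate direction. -/
lemma fw_dx {μw μg μo : ℝ} (hw : 0 < μw) (hg : 0 < μg) (ho : 0 < μo) (u : ℝ × ℝ) :
    fderiv ℝ (fw μw μg μo) u (1, 0)
      = (2 * u.1 * Dfun μw μg μo u - u.1 ^ 2 * (2 * u.1 / μw - 2 * so u / μo))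
          / (μw * (Dfun μw μg μo u) ^ 2) := by
  have hD := Dfun_pos hw hg ho u
  apply fderiv_dir1 (diff_fw hw hg ho u)
  have hl : HasDerivAt (fun t : ℝ => u.1 + t) 1 0 := (hasDerivAt_id 0).const_add u.1
  have hc : HasDerivAt (fun t : ℝ => (u.1 + t) ^ 2) ((2:ℕ) * (u.1 + 0) ^ (2-1) * 1) 0 :=
    hl.pow 2
  have hz : HasDerivAt (fun t : ℝ => 1 - (u.1 + t) - u.2) (-1) 0 := by
    simpa using (hl.const_sub 1).sub_const u.2
  have hz2 : HasDerivAt (fun t : ℝ => (1 - (u.1 + t) - u.2) ^ 2)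
      ((2:ℕ) * (1 - (u.1 + 0) - u.2) ^ (2-1) * (-1)) 0 := hz.pow 2
  have hd : HasDerivAt
      (fun t : ℝ => μw * ((u.1 + t) ^ 2 / μw + u.2 ^ 2 / μg + (1 - (u.1 + t) - u.2) ^ 2 / μo))
      (μw * (((2:ℕ) * (u.1 + 0) ^ (2-1) * 1) / μw + 0 + ((2:ℕ) * (1 - (u.1 + 0) - u.2) ^ (2-1) * (-1)) / μo)) 0 := by
    exact (((hc.div_const μw).add (hasDerivAt_const 0 (u.2 ^ 2 / μg))).add (hz2.div_const μo)).const_mul μw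
  have hne : μw * ((u.1 + 0) ^ 2 / μw + u.2 ^ 2 / μg + (1 - (u.1 + 0) - u.2) ^ 2 / μo) ≠ 0 := by
    have : (u.1 + 0) ^ 2 / μw + u.2 ^ 2 / μg + (1 - (u.1 + 0) - u.2) ^ 2 / μo = Dfun μw μg μo u := by
      simp [Dfun, so]
    rw [this]; positivity
  have H := hc.div hd hne
  have Hfun : (fun t : ℝ => fw μw μg μo (u.1 + t, u.2))
      = fun t : ℝ => (u.1 + t) ^ 2 /
          (μw * ((u.1 + t) ^ 2 / μw + u.2 ^ 2 / μg + (1 - (u.1 + t) - u.2) ^ 2 / μo)) := by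
    funext t; simp [fw, Dfun, so]
  rw [Hfun]
  refine H.congr_deriv (Eq.symm ?_)
  push_cast
  norm_num
  have hDdef : Dfun μw μg μo u = u.1 ^ 2 / μw + u.2 ^ 2 / μg + (1 - u.1 - u.2) ^ 2 / μo := by
    simp [Dfun, so]
  rw [← hDdef, show (1 : ℝ) - u.1 - u.2 = so u from rfl]
  have hwne : μw ≠ 0 := ne_of_gt hw
  have hgne : μg ≠ 0 := ne_of_gt hg
  have hone : μo ≠ 0 := ne_of_gt ho
  have hcne : Dfun μw μg μo u ≠ 0 := ne_of_gt hD
  field_simp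
  ring

set_option maxHeartbeats 1600000 in
/-- Scalar derivative of `fw` along the second coordinate direction. -/
lemma fw_dy {μw μg μo : ℝ} (hw : 0 < μw) (hg : 0 < μg) (ho : 0 < μo) (u : ℝ × ℝ) :
    fderiv ℝ (fw μw μg μo) u (0, 1)
      = (- u.1 ^ 2 * (2 * u.2 / μg - 2 * so u / μo)) / (μw * (Dfun μw μg μo u) ^ 2) := by
  have hD := Dfun_pos hw hg ho u
  apply fderiv_dir2 (diff_fw hw hg ho u)
  have hl : HasDerivAt (fun t : ℝ => u.2 + t) 1 0 := (hasDerivAt_id 0).const_add u.2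
  have hc : HasDerivAt (fun _ : ℝ => u.1 ^ 2) 0 0 := hasDerivAt_const 0 (u.1 ^ 2)
  have hy2 : HasDerivAt (fun t : ℝ => (u.2 + t) ^ 2) ((2:ℕ) * (u.2 + 0) ^ (2-1) * 1) 0 :=
    hl.pow 2
  have hz : HasDerivAt (fun t : ℝ => 1 - u.1 - (u.2 + t)) (-1) 0 := by
    simpa using hl.const_sub (1 - u.1)
  have hz2 : HasDerivAt (fun t : ℝ => (1 - u.1 - (u.2 + t)) ^ 2)
      ((2:ℕ) * (1 - u.1 - (u.2 + 0)) ^ (2-1) * (-1)) 0 := hz.pow 2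
  have hd : HasDerivAt
      (fun t : ℝ => μw * (u.1 ^ 2 / μw + (u.2 + t) ^ 2 / μg + (1 - u.1 - (u.2 + t)) ^ 2 / μo))
      (μw * (0 + ((2:ℕ) * (u.2 + 0) ^ (2-1) * 1) / μg + ((2:ℕ) * (1 - u.1 - (u.2 + 0)) ^ (2-1) * (-1)) / μo)) 0 := by
    exact (((hasDerivAt_const 0 (u.1 ^ 2 / μw)).add (hy2.div_const μg)).add (hz2.div_const μo)).const_mul μw
  have hne : μw * (u.1 ^ 2 / μw + (u.2 + 0) ^ 2 / μg + (1 - u.1 - (u.2 + 0)) ^ 2 / μo) ≠ 0 := by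
    have : u.1 ^ 2 / μw + (u.2 + 0) ^ 2 / μg + (1 - u.1 - (u.2 + 0)) ^ 2 / μo = Dfun μw μg μo u := by
      simp [Dfun, so]
    rw [this]; positivity
  have H := hc.div hd hne
  have Hfun : (fun t : ℝ => fw μw μg μo (u.1, u.2 + t))
      = fun t : ℝ => u.1 ^ 2 /
          (μw * (u.1 ^ 2 / μw + (u.2 + t) ^ 2 / μg + (1 - u.1 - (u.2 + t)) ^ 2 / μo)) := by
    funext t; simp [fw, Dfun, so]
  rw [Hfun]
  refine H.congr_deriv (Eq.symm ?_)
  push_cast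
  norm_num
  have hDdef : Dfun μw μg μo u = u.1 ^ 2 / μw + u.2 ^ 2 / μg + (1 - u.1 - u.2) ^ 2 / μo := by
    simp [Dfun, so]
  rw [← hDdef, show (1 : ℝ) - u.1 - u.2 = so u from rfl]
  have hwne : μw ≠ 0 := ne_of_gt hw
  have hgne : μg ≠ 0 := ne_of_gt hg
  have hone : μo ≠ 0 := ne_of_gt ho
  have hcne : Dfun μw μg μo u ≠ 0 := ne_of_gt hD
  field_simp
  ring

set_option maxHeartbeats 1600000 in
/-- Scalar derivative of `fg` along the first coordinate direction. -/
lemma fg_dx {μw μg μo : ℝ} (hw : 0 < μw) (hg : 0 < μg) (ho : 0 < μo) (u : ℝ × ℝ) :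
    fderiv ℝ (fg μw μg μo) u (1, 0)
      = (- u.2 ^ 2 * (2 * u.1 / μw - 2 * so u / μo)) / (μg * (Dfun μw μg μo u) ^ 2) := by
  have hD := Dfun_pos hw hg ho u
  apply fderiv_dir1 (diff_fg hw hg ho u)
  have hl : HasDerivAt (fun t : ℝ => u.1 + t) 1 0 := (hasDerivAt_id 0).const_add u.1
  have hc : HasDerivAt (fun _ : ℝ => u.2 ^ 2) 0 0 := hasDerivAt_const 0 (u.2 ^ 2)
  have hx2 : HasDerivAt (fun t : ℝ => (u.1 + t) ^ 2) ((2:ℕ) * (u.1 + 0) ^ (2-1) * 1) 0 :=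
    hl.pow 2
  have hz : HasDerivAt (fun t : ℝ => 1 - (u.1 + t) - u.2) (-1) 0 := by
    simpa using (hl.const_sub 1).sub_const u.2
  have hz2 : HasDerivAt (fun t : ℝ => (1 - (u.1 + t) - u.2) ^ 2)
      ((2:ℕ) * (1 - (u.1 + 0) - u.2) ^ (2-1) * (-1)) 0 := hz.pow 2
  have hd : HasDerivAt
      (fun t : ℝ => μg * ((u.1 + t) ^ 2 / μw + u.2 ^ 2 / μg + (1 - (u.1 + t) - u.2) ^ 2 / μo))
      (μg * (((2:ℕ) * (u.1 + 0) ^ (2-1) * 1) / μw + 0 + ((2:ℕ) * (1 - (u.1 + 0) - u.2) ^ (2-1) * (-1)) / μo)) 0 := by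
    exact (((hx2.div_const μw).add (hasDerivAt_const 0 (u.2 ^ 2 / μg))).add (hz2.div_const μo)).const_mul μg
  have hne : μg * ((u.1 + 0) ^ 2 / μw + u.2 ^ 2 / μg + (1 - (u.1 + 0) - u.2) ^ 2 / μo) ≠ 0 := by
    have : (u.1 + 0) ^ 2 / μw + u.2 ^ 2 / μg + (1 - (u.1 + 0) - u.2) ^ 2 / μo = Dfun μw μg μo u := by
      simp [Dfun, so]
    rw [this]; positivity
  have H := hc.div hd hne
  have Hfun : (fun t : ℝ => fg μw μg μo (u.1 + t, u.2))
      = fun t : ℝ => u.2 ^ 2 /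
          (μg * ((u.1 + t) ^ 2 / μw + u.2 ^ 2 / μg + (1 - (u.1 + t) - u.2) ^ 2 / μo)) := by
    funext t; simp [fg, Dfun, so]
  rw [Hfun]
  refine H.congr_deriv (Eq.symm ?_)
  push_cast
  norm_num
  have hDdef : Dfun μw μg μo u = u.1 ^ 2 / μw + u.2 ^ 2 / μg + (1 - u.1 - u.2) ^ 2 / μo := by
    simp [Dfun, so]
  rw [← hDdef, show (1 : ℝ) - u.1 - u.2 = so u from rfl]
  have hwne : μw ≠ 0 := ne_of_gt hw
  have hgne : μg ≠ 0 := ne_of_gt hg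
  have hone : μo ≠ 0 := ne_of_gt ho
  have hcne : Dfun μw μg μo u ≠ 0 := ne_of_gt hD
  field_simp
  ring

set_option maxHeartbeats 1600000 in
/-- Scalar derivative of `fg` along the second coordinate direction. -/
lemma fg_dy {μw μg μo : ℝ} (hw : 0 < μw) (hg : 0 < μg) (ho : 0 < μo) (u : ℝ × ℝ) :
    fderiv ℝ (fg μw μg μo) u (0, 1)
      = (2 * u.2 * Dfun μw μg μo u - u.2 ^ 2 * (2 * u.2 / μg - 2 * so u / μo))
          / (μg * (Dfun μw μg μo u) ^ 2) := by
  have hD := Dfun_pos hw hg ho u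
  apply fderiv_dir2 (diff_fg hw hg ho u)
  have hl : HasDerivAt (fun t : ℝ => u.2 + t) 1 0 := (hasDerivAt_id 0).const_add u.2
  have hc : HasDerivAt (fun t : ℝ => (u.2 + t) ^ 2) ((2:ℕ) * (u.2 + 0) ^ (2-1) * 1) 0 :=
    hl.pow 2
  have hz : HasDerivAt (fun t : ℝ => 1 - u.1 - (u.2 + t)) (-1) 0 := by
    simpa using hl.const_sub (1 - u.1)
  have hz2 : HasDerivAt (fun t : ℝ => (1 - u.1 - (u.2 + t)) ^ 2)
      ((2:ℕ) * (1 - u.1 - (u.2 + 0)) ^ (2-1) * (-1)) 0 := hz.pow 2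
  have hd : HasDerivAt
      (fun t : ℝ => μg * (u.1 ^ 2 / μw + (u.2 + t) ^ 2 / μg + (1 - u.1 - (u.2 + t)) ^ 2 / μo))
      (μg * (0 + ((2:ℕ) * (u.2 + 0) ^ (2-1) * 1) / μg + ((2:ℕ) * (1 - u.1 - (u.2 + 0)) ^ (2-1) * (-1)) / μo)) 0 := by
    exact (((hasDerivAt_const 0 (u.1 ^ 2 / μw)).add (hc.div_const μg)).add (hz2.div_const μo)).const_mul μg
  have hne : μg * (u.1 ^ 2 / μw + (u.2 + 0) ^ 2 / μg + (1 - u.1 - (u.2 + 0)) ^ 2 / μo) ≠ 0 := by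
    have : u.1 ^ 2 / μw + (u.2 + 0) ^ 2 / μg + (1 - u.1 - (u.2 + 0)) ^ 2 / μo = Dfun μw μg μo u := by
      simp [Dfun, so]
    rw [this]; positivity
  have H := hc.div hd hne
  have Hfun : (fun t : ℝ => fg μw μg μo (u.1, u.2 + t))
      = fun t : ℝ => (u.2 + t) ^ 2 /
          (μg * (u.1 ^ 2 / μw + (u.2 + t) ^ 2 / μg + (1 - u.1 - (u.2 + t)) ^ 2 / μo)) := by
    funext t; simp [fg, Dfun, so]
  rw [Hfun]
  refine H.congr_deriv (Eq.symm ?_)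
  push_cast
  norm_num
  have hDdef : Dfun μw μg μo u = u.1 ^ 2 / μw + u.2 ^ 2 / μg + (1 - u.1 - u.2) ^ 2 / μo := by
    simp [Dfun, so]
  rw [← hDdef, show (1 : ℝ) - u.1 - u.2 = so u from rfl]
  have hwne : μw ≠ 0 := ne_of_gt hw
  have hgne : μg ≠ 0 := ne_of_gt hg
  have hone : μo ≠ 0 := ne_of_gt ho
  have hcne : Dfun μw μg μo u ≠ 0 := ne_of_gt hD
  field_simp
  ring

set_option maxHeartbeats 3200000 in
/-- on the boundary of the saturation triangle, away from the vertices,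
the trace of the Jacobian is positive; the eigenvalues there are `0` and `tr J(u) > 0`. -/
theorem trace_jac_pos_on_boundary (μw μg μo : ℝ) (hw : 0 < μw) (hg : 0 < μg) (ho : 0 < μo) :
    ∀ u ∈ satTriangle, (u.1 = 0 ∨ u.2 = 0 ∨ u.1 + u.2 = 1) →
      u ≠ ((0 : ℝ), (1 : ℝ)) → u ≠ ((1 : ℝ), (0 : ℝ)) → u ≠ ((0 : ℝ), (0 : ℝ)) →
      0 < (jac μw μg μo u).trace ∧
      (jac μw μg μo u).charpoly = X * (X - C ((jac μw μg μo u).trace)) := by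
  intro u hu hbd hG hW hO
  obtain ⟨hx0, hy0, hxy⟩ := hu
  have hD := Dfun_pos hw hg ho u
  have ha := fw_dx hw hg ho u
  have hb := fw_dy hw hg ho u
  have hc := fg_dx hw hg ho u
  have hd := fg_dy hw hg ho u
  rw [show so u = 1 - u.1 - u.2 from rfl] at ha hb hc hd
  have htr : (jac μw μg μo u).trace
      = fderiv ℝ (fw μw μg μo) u (1, 0) + fderiv ℝ (fg μw μg μo) u (0, 1) := by
    simp [jac, Matrix.trace_fin_two_of]
  have hdet : (jac μw μg μo u).det
      = fderiv ℝ (fw μw μg μo) u (1, 0) * fderiv ℝ (fg μw μg μo) u (0, 1)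
        - fderiv ℝ (fw μw μg μo) u (0, 1) * fderiv ℝ (fg μw μg μo) u (1, 0) := by
    simp [jac, Matrix.det_fin_two_of]
  set E := Dfun μw μg μo u with hE
  have hwne : μw ≠ 0 := ne_of_gt hw
  have hgne : μg ≠ 0 := ne_of_gt hg
  have hone : μo ≠ 0 := ne_of_gt ho
  have hE2g : (0:ℝ) < μg * E ^ 2 := mul_pos hg (pow_pos hD 2)
  have hE2w : (0:ℝ) < μw * E ^ 2 := mul_pos hw (pow_pos hD 2)
  -- trace positivity and det vanishing, by cases on the edge
  have key : 0 < (jac μw μg μo u).trace ∧ (jac μw μg μo u).det = 0 := by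
    rcases hbd with h | h | h
    · -- u.1 = 0, edge GO: 0 < u.2 < 1
      have hy1 : u.2 < 1 := by
        rcases lt_or_eq_of_le (by linarith : u.2 ≤ 1) with h' | h'
        · exact h'
        · exfalso; exact hG (by rw [show u = (u.1, u.2) from rfl, h, h'])
      have hy2 : 0 < u.2 := by
        rcases lt_or_eq_of_le hy0 with h' | h'
        · exact h'
        · exfalso; exact hO (by rw [show u = (u.1, u.2) from rfl, h, ← h'])
      have hE0 : E = u.2 ^ 2 / μg + (1 - u.2) ^ 2 / μo := by
        rw [hE]; simp only [Dfun, so, h]; ring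
      rw [h] at ha hb hc hd
      norm_num at ha hb
      constructor
      · rw [htr, ha, hd, zero_add]
        have hnum : 2 * u.2 * E - u.2 ^ 2 * (2 * u.2 / μg - 2 * (1 - 0 - u.2) / μo)
            = 2 * u.2 * (1 - u.2) / μo := by
          rw [hE0]; field_simp; ring
        rw [hnum]
        exact div_pos (div_pos (by nlinarith) ho) hE2g
      · rw [hdet, ha, hb]; ring
    · -- u.2 = 0, edge WO: 0 < u.1 < 1
      have hx1 : u.1 < 1 := by
        rcases lt_or_eq_of_le (by linarith : u.1 ≤ 1) with h' | h'
        · exact h'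
        · exfalso; exact hW (by rw [show u = (u.1, u.2) from rfl, ← h', h])
      have hx2 : 0 < u.1 := by
        rcases lt_or_eq_of_le hx0 with h' | h'
        · exact h'
        · exfalso; exact hO (by rw [show u = (u.1, u.2) from rfl, ← h', h])
      have hE0 : E = u.1 ^ 2 / μw + (1 - u.1) ^ 2 / μo := by
        rw [hE]; simp only [Dfun, so, h]; ring
      rw [h] at ha hb hc hd
      norm_num at hc hd
      constructor
      · rw [htr, ha, hd, add_zero]
        have hnum : 2 * u.1 * E - u.1 ^ 2 * (2 * u.1 / μw - 2 * (1 - u.1 - 0) / μo)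
            = 2 * u.1 * (1 - u.1) / μo := by
          rw [hE0]; field_simp; ring
        rw [hnum]
        exact div_pos (div_pos (by nlinarith) ho) hE2w
      · rw [hdet, hc, hd]; ring
    · -- u.1 + u.2 = 1, edge GW: 0 < u.1, 0 < u.2
      have hx2 : 0 < u.1 := by
        rcases lt_or_eq_of_le hx0 with h' | h'
        · exact h'
        · exfalso; exact hG (by rw [show u = (u.1, u.2) from rfl, ← h', show u.2 = 1 by linarith])
      have hy2 : 0 < u.2 := by
        rcases lt_or_eq_of_le hy0 with h' | h'
        · exact h'
        · exfalso; exact hW (by rw [show u = (u.1, u.2) from rfl, ← h', show u.1 = 1 by linarith])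
      have hz0 : (1:ℝ) - u.1 - u.2 = 0 := by linarith
      rw [hz0] at ha hb hc hd
      have hE0 : E = u.1 ^ 2 / μw + u.2 ^ 2 / μg := by
        rw [hE]; simp only [Dfun, so, hz0]; ring
      have hsum : (0:ℝ) < u.1 ^ 2 / μw + u.2 ^ 2 / μg := hE0 ▸ hD
      have hsumne : u.1 ^ 2 / μw + u.2 ^ 2 / μg ≠ 0 := ne_of_gt hsum
      constructor
      · rw [htr, ha, hd]
        have hnum : (2 * u.1 * E - u.1 ^ 2 * (2 * u.1 / μw - 2 * 0 / μo)) / (μw * E ^ 2)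
            + (2 * u.2 * E - u.2 ^ 2 * (2 * u.2 / μg - 2 * 0 / μo)) / (μg * E ^ 2)
            = 2 * u.1 * u.2 * (u.1 + u.2) / (μw * μg * E ^ 2) := by
          rw [hE0]; field_simp; ring
        rw [hnum, h]
        apply div_pos
        · nlinarith
        · exact mul_pos (mul_pos hw hg) (pow_pos hD 2)
      · rw [hdet, ha, hb, hc, hd, hE0]
        field_simp
        ring
  obtain ⟨htrpos, hdet0⟩ := key
  refine ⟨htrpos, ?_⟩
  -- charpoly
  have hcp : (jac μw μg μo u).charpoly
      = (X - C ((jac μw μg μo u) 0 0)) * (X - C ((jac μw μg μo u) 1 1))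
        - C ((jac μw μg μo u) 0 1) * C ((jac μw μg μo u) 1 0) := by
    rw [Matrix.charpoly, Matrix.det_fin_two]
    simp [Matrix.charmatrix_apply, Matrix.diagonal]
  have htr2 : (jac μw μg μo u).trace = (jac μw μg μo u) 0 0 + (jac μw μg μo u) 1 1 := by
    simp [Matrix.trace_fin_two]
  have hdet2 : (jac μw μg μo u) 0 0 * (jac μw μg μo u) 1 1
      - (jac μw μg μo u) 0 1 * (jac μw μg μo u) 1 0 = 0 := by
    rw [← Matrix.det_fin_two]; exact hdet0
  rw [hcp, htr2]
  have hC : C ((jac μw μg μo u) 0 0) * C ((jac μw μg μo u) 1 1)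
      = C ((jac μw μg μo u) 0 1) * C ((jac μw μg μo u) 1 0) := by
    rw [← C_mul, ← C_mul]
    congr 1
    linarith [hdet2]
  rw [C_add]
  linear_combination hC

end ThreePhaseFlow
end

section
/- On the edge s_o = 0 of the saturation triangle, the three-phase flow reduces to two-phase Buckley–Leverett flow: for u = (s, 1−s) with 0 < s < 1, the nonzero characteristic speed tr J(u) of the 2×2 system equals the derivative g'(s) of the two-phase water–gas fractional flow g(s) = (s²/μ_w)/(s²/μ_w + (1−s)²/μ_g). -/
open Matrix Polynomial

noncomputable section ThreePhaseFlow

lemma hasFDerivAt_sq {E : Type*} [NormedAddCommGroup E] [NormedSpace ℝ E]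
    {f : E → ℝ} {f' : E →L[ℝ] ℝ} {x : E} (h : HasFDerivAt f f' x) :
    HasFDerivAt (fun p => f p ^ 2) ((2 * f x) • f') x := by
  have h2 : HasFDerivAt (fun p => f p * f p) (f x • f' + f x • f') x := h.mul h
  have he : (2 * f x) • f' = f x • f' + f x • f' := by rw [two_mul, add_smul]
  rw [he]
  simpa only [pow_two] using h2

lemma hasFDerivAt_div {E : Type*} [NormedAddCommGroup E] [NormedSpace ℝ E]
    {f g : E → ℝ} {f' g' : E →L[ℝ] ℝ} {x : E} (hf : HasFDerivAt f f' x)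
    (hg : HasFDerivAt g g' x) (hx : g x ≠ 0) :
    HasFDerivAt (fun p => f p / g p)
      ((g x)⁻¹ • f' + (f x * (-(g x ^ 2)⁻¹)) • g') x := by
  have hinv : HasFDerivAt (fun p => (g p)⁻¹) ((-(g x ^ 2)⁻¹) • g') x :=
    (hasDerivAt_inv hx).comp_hasFDerivAt x hg
  have h2 : HasFDerivAt (fun p => f p * (g p)⁻¹) (f x • -(g x ^ 2)⁻¹ • g' + (g x)⁻¹ • f') x :=
    hf.mul hinv
  have hfun : (fun p => f p * (g p)⁻¹) = fun p => f p / g p := by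
    funext p; rw [div_eq_mul_inv]
  rw [hfun] at h2
  convert h2 using 1
  rw [add_comm]
  rw [smul_smul]

/-- on the edge `s_o = 0` the flow reduces to two-phase Buckley–Leverett
flow: the nonzero characteristic speed `tr J(u)` equals `g'(s)` for the water–gas
fractional flow `g`. -/
theorem buckley_leverett_on_edge (μw μg μo : ℝ) (hw : 0 < μw) (hg : 0 < μg) (ho : 0 < μo) :
    ∀ s : ℝ, 0 < s → s < 1 →
      (jac μw μg μo (s, 1 - s)).trace =
        deriv (fun t : ℝ => (t ^ 2 / μw) / (t ^ 2 / μw + (1 - t) ^ 2 / μg)) s := by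
  intro s hs0 hs1
  set u : ℝ × ℝ := (s, 1 - s) with hu
  have hso : so u = 0 := by simp [so, hu]
  have hDu : Dfun μw μg μo u = s ^ 2 / μw + (1 - s) ^ 2 / μg := by
    simp [Dfun, hso, hu, so]
  have hDd : 0 < s ^ 2 / μw + (1 - s) ^ 2 / μg := by positivity
  -- derivative of Dfun at u
  have hsoD : HasFDerivAt so
      ((0 : ℝ × ℝ →L[ℝ] ℝ) - ContinuousLinearMap.fst ℝ ℝ ℝ - ContinuousLinearMap.snd ℝ ℝ ℝ) u :=
    ((hasFDerivAt_const (1:ℝ) u).sub (hasFDerivAt_fst)).sub (hasFDerivAt_snd)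
  have hD : HasFDerivAt (Dfun μw μg μo)
      ((μw⁻¹ • ((2 * u.1) • ContinuousLinearMap.fst ℝ ℝ ℝ) +
        μg⁻¹ • ((2 * u.2) • ContinuousLinearMap.snd ℝ ℝ ℝ)) +
       μo⁻¹ • ((2 * so u) • ((0 : ℝ × ℝ →L[ℝ] ℝ) - ContinuousLinearMap.fst ℝ ℝ ℝ -
          ContinuousLinearMap.snd ℝ ℝ ℝ))) u := by
    have h1 := (hasFDerivAt_sq (hasFDerivAt_fst (𝕜 := ℝ) (p := u))).const_smul μw⁻¹
    have h2 := (hasFDerivAt_sq (hasFDerivAt_snd (𝕜 := ℝ) (p := u))).const_smul μg⁻¹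
    have h3 := (hasFDerivAt_sq hsoD).const_smul μo⁻¹
    simp only [Pi.smul_def, smul_eq_mul, ← div_eq_inv_mul] at h1 h2 h3
    exact (h1.add h2).add h3
  have hMw : μw * Dfun μw μg μo u ≠ 0 := by
    rw [hDu]; positivity
  have hMg : μg * Dfun μw μg μo u ≠ 0 := by
    rw [hDu]; positivity
  have hfwD := hasFDerivAt_div (hasFDerivAt_sq (hasFDerivAt_fst (𝕜 := ℝ) (p := u)))
    (hD.const_mul μw) hMw
  have hfgD := hasFDerivAt_div (hasFDerivAt_sq (hasFDerivAt_snd (𝕜 := ℝ) (p := u)))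
    (hD.const_mul μg) hMg
  have hfwD' : HasFDerivAt (fw μw μg μo) _ u := hfwD
  have hfgD' : HasFDerivAt (fg μw μg μo) _ u := hfgD
  -- RHS derivative
  have hrhs : HasDerivAt (fun t : ℝ => (t ^ 2 / μw) / (t ^ 2 / μw + (1 - t) ^ 2 / μg))
      ((2 * s / μw * (s ^ 2 / μw + (1 - s) ^ 2 / μg) -
        s ^ 2 / μw * (2 * s / μw + 2 * (1 - s) * (-1) / μg)) /
        (s ^ 2 / μw + (1 - s) ^ 2 / μg) ^ 2) s := by
    have hn : HasDerivAt (fun t : ℝ => t ^ 2 / μw) (2 * s / μw) s := by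
      simpa using (hasDerivAt_pow 2 s).div_const μw
    have hm : HasDerivAt (fun t : ℝ => (1 - t) ^ 2 / μg) (2 * (1 - s) * (-1) / μg) s := by
      have h0 : HasDerivAt (fun t : ℝ => 1 - t) (-1) s := by
        simpa [Pi.sub_def] using (hasDerivAt_const s (1:ℝ)).sub (hasDerivAt_id s)
      have h1 := (h0.pow 2).div_const μg
      simpa using h1
    exact hn.div (hn.add hm) (ne_of_gt hDd)
  rw [hrhs.deriv]
  rw [Matrix.trace_fin_two]
  simp only [jac, Matrix.cons_val', Matrix.cons_val_zero, Matrix.cons_val_one, Matrix.head_cons,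
    Matrix.empty_val', Matrix.cons_val_fin_one, Matrix.head_fin_const]
  rw [hfwD'.fderiv, hfgD'.fderiv]
  simp only [ContinuousLinearMap.add_apply, ContinuousLinearMap.smul_apply,
    ContinuousLinearMap.sub_apply, ContinuousLinearMap.zero_apply,
    ContinuousLinearMap.coe_fst', ContinuousLinearMap.coe_snd', smul_eq_mul]
  rw [hDu, hso]
  norm_num [hu]
  field_simp
  ring

end ThreePhaseFlow
end

section
/- The flux map preserves each of the three lines through the umbilic point: if a state u in the saturation triangle Δ satisfies μ_o·s_w = μ_w·s_o (the line G–D), then μ_o·f_w(u) = μ_w·f_o(u); if u satisfies μ_o·s_g = μ_g·s_o (the line W–E), then μ_o·f_g(u) = μ_g·f_o(u); and if u satisfies μ_g·s_w = μ_w·s_g (the line O–B), then μ_g·f_w(u) = μ_w·f_g(u). Here f_o(u) := s_o²/(μ_o D(u)). -/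
open Matrix Polynomial

noncomputable section ThreePhaseFlow

/-- the flux map preserves the three lines through the umbilic point:
`G–D`, `W–E` and `O–B`. -/
theorem flux_preserves_invariant_lines (μw μg μo : ℝ)
    (hw : 0 < μw) (hg : 0 < μg) (ho : 0 < μo) :
    ∀ u ∈ satTriangle,
      (μo * u.1 = μw * so u → μo * fw μw μg μo u = μw * fo μw μg μo u) ∧
      (μo * u.2 = μg * so u → μo * fg μw μg μo u = μg * fo μw μg μo u) ∧
      (μg * u.1 = μw * u.2 → μg * fw μw μg μo u = μw * fg μw μg μo u) := by
  intro u hu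
  obtain ⟨h1, h2, h3⟩ := hu
  have hD : 0 < Dfun μw μg μo u := by
    unfold Dfun so
    have hnz : 0 < u.1 ^ 2 + u.2 ^ 2 + (1 - u.1 - u.2) ^ 2 := by nlinarith
    rcases eq_or_lt_of_le (sq_nonneg u.1) with hw1 | hw1
    · rcases eq_or_lt_of_le (sq_nonneg u.2) with hg1 | hg1
      · have : 0 < (1 - u.1 - u.2) ^ 2 := by nlinarith
        have := div_pos this ho
        positivity
      · have := div_pos hg1 hg
        positivity
    · have := div_pos hw1 hw
      positivity
  refine ⟨fun h => ?_, fun h => ?_, fun h => ?_⟩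
  · unfold fw fo
    field_simp
    linear_combination (μo * u.1 + μw * so u) * h
  · unfold fg fo
    field_simp
    linear_combination (μo * u.2 + μg * so u) * h
  · unfold fw fg
    field_simp
    linear_combination (μg * u.1 + μw * u.2) * h

end ThreePhaseFlow
end

section
/- On each of the three invariant lines through the umbilic point U, the line direction is a fast eigenvector on the vertex side of U and a slow eigenvector on the other side: for u strictly between G = (0,1) and U on the line μ_o s_w = μ_w s_o, the vector v = (μ_w, −(μ_w + μ_o)) satisfies J(u)v = λ_f(u)·v with λ_f(u) = (tr J(u) + √disc(u))/2 the larger eigenvalue, while for u strictly between U and D = (μ_w/(μ_w+μ_o), 0) one has J(u)v = λ_s(u)·v with λ_s(u) = (tr J(u) − √disc(u))/2 the smaller eigenvalue; the analogous statements hold on the line μ_o s_g = μ_g s_o with v = (−(μ_g+μ_o), μ_g) (fast between W = (1,0) and U, slow between U and E = (0, μ_g/(μ_g+μ_o))), and on the line μ_g s_w = μ_w s_g with v = (μ_w, μ_g) (fast between O = (0,0) and U, slow between U and B = (μ_w/(μ_w+μ_g), μ_g/(μ_w+μ_g))). -/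
open Matrix Polynomial

set_option maxHeartbeats 1000000

noncomputable section ThreePhaseFlow

lemma hasFDerivAt_so (u : ℝ × ℝ) :
    HasFDerivAt so (-(ContinuousLinearMap.fst ℝ ℝ ℝ) - ContinuousLinearMap.snd ℝ ℝ ℝ) u := by
  have h := ((hasFDerivAt_const (𝕜 := ℝ) (1:ℝ) u).sub (hasFDerivAt_fst (p := u))).sub
    (hasFDerivAt_snd (p := u))
  have e : (-(ContinuousLinearMap.fst ℝ ℝ ℝ) - ContinuousLinearMap.snd ℝ ℝ ℝ : ℝ × ℝ →L[ℝ] ℝ) =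
      0 - ContinuousLinearMap.fst ℝ ℝ ℝ - ContinuousLinearMap.snd ℝ ℝ ℝ := by simp
  rw [e]; exact h

lemma fderiv_fw_apply (μw μg μo : ℝ) (hw : 0 < μw) (hg : 0 < μg) (ho : 0 < μo)
    (u v : ℝ × ℝ) :
    fderiv ℝ (fw μw μg μo) u v =
      (2*u.1*v.1*Dfun μw μg μo u
        - u.1^2*((2*u.1/μw - 2*so u/μo)*v.1 + (2*u.2/μg - 2*so u/μo)*v.2))
        / (μw * (Dfun μw μg μo u)^2) := by
  have hso := hasFDerivAt_so u
  have h1 : HasFDerivAt (fun y : ℝ × ℝ => y.1 * y.1)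
      (u.1 • ContinuousLinearMap.fst ℝ ℝ ℝ + u.1 • ContinuousLinearMap.fst ℝ ℝ ℝ) u :=
    (hasFDerivAt_fst (𝕜 := ℝ) (p := u)).mul (hasFDerivAt_fst (𝕜 := ℝ) (p := u))
  have h2 := (hasFDerivAt_snd (𝕜 := ℝ) (p := u)).mul (hasFDerivAt_snd (𝕜 := ℝ) (p := u))
  have h3 := hso.mul hso
  have hD := ((h1.const_mul μw⁻¹).add (h2.const_mul μg⁻¹)).add (h3.const_mul μo⁻¹)
  rw [show Dfun μw μg μo = fun y : ℝ × ℝ =>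
      μw⁻¹ * (y.1 * y.1) + μg⁻¹ * (y.2 * y.2) + μo⁻¹ * (so y * so y) from by
    funext y; simp [Dfun]; ring]
  have hDpos : 0 < μw⁻¹ * (u.1 * u.1) + μg⁻¹ * (u.2 * u.2) + μo⁻¹ * (so u * so u) := by
    have := Dfun_pos hw hg ho u
    calc (0:ℝ) < Dfun μw μg μo u := this
    _ = _ := by simp [Dfun]; ring
  have hDne := ne_of_gt hDpos
  have hne : μw * (μw⁻¹ * (u.1 * u.1) + μg⁻¹ * (u.2 * u.2) + μo⁻¹ * (so u * so u)) ≠ 0 := by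
    positivity
  have hden := hD.const_mul μw
  have hinv := (hasFDerivAt_inv' (𝕜 := ℝ) hne).comp u hden
  have heq : fw μw μg μo = fun y : ℝ × ℝ => (y.1 * y.1) *
      (Inv.inv ∘ fun y : ℝ × ℝ =>
        μw * (μw⁻¹ * (y.1 * y.1) + μg⁻¹ * (y.2 * y.2) + μo⁻¹ * (so y * so y))) y := by
    funext y; simp [fw, Function.comp, div_eq_mul_inv, Dfun]; ring_nf
  have hfd : HasFDerivAt (fun y : ℝ × ℝ => (y.1 * y.1) *
      (Inv.inv ∘ fun y : ℝ × ℝ =>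
        μw * (μw⁻¹ * (y.1 * y.1) + μg⁻¹ * (y.2 * y.2) + μo⁻¹ * (so y * so y))) y) _ u :=
    h1.mul hinv
  rw [heq, hfd.fderiv]
  simp only [ContinuousLinearMap.add_apply, ContinuousLinearMap.smul_apply,
    ContinuousLinearMap.comp_apply, ContinuousLinearMap.neg_apply,
    ContinuousLinearMap.sub_apply, ContinuousLinearMap.coe_fst',
    ContinuousLinearMap.coe_snd', ContinuousLinearMap.mulLeftRight_apply,
    smul_eq_mul, Function.comp]
  set d : ℝ := μw⁻¹ * (u.1 * u.1) + μg⁻¹ * (u.2 * u.2) + μo⁻¹ * (so u * so u) with hd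
  field_simp [hw.ne', hg.ne', ho.ne', hDne]
  ring

lemma fderiv_fg_apply (μw μg μo : ℝ) (hw : 0 < μw) (hg : 0 < μg) (ho : 0 < μo)
    (u v : ℝ × ℝ) :
    fderiv ℝ (fg μw μg μo) u v =
      (2*u.2*v.2*Dfun μw μg μo u
        - u.2^2*((2*u.1/μw - 2*so u/μo)*v.1 + (2*u.2/μg - 2*so u/μo)*v.2))
        / (μg * (Dfun μw μg μo u)^2) := by
  have hso := hasFDerivAt_so u
  have h1 : HasFDerivAt (fun y : ℝ × ℝ => y.2 * y.2)
      (u.2 • ContinuousLinearMap.snd ℝ ℝ ℝ + u.2 • ContinuousLinearMap.snd ℝ ℝ ℝ) u :=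
    (hasFDerivAt_snd (𝕜 := ℝ) (p := u)).mul (hasFDerivAt_snd (𝕜 := ℝ) (p := u))
  have h2 := (hasFDerivAt_fst (𝕜 := ℝ) (p := u)).mul (hasFDerivAt_fst (𝕜 := ℝ) (p := u))
  have h3 := hso.mul hso
  have hD := ((h2.const_mul μw⁻¹).add (h1.const_mul μg⁻¹)).add (h3.const_mul μo⁻¹)
  rw [show Dfun μw μg μo = fun y : ℝ × ℝ =>
      μw⁻¹ * (y.1 * y.1) + μg⁻¹ * (y.2 * y.2) + μo⁻¹ * (so y * so y) from by
    funext y; simp [Dfun]; ring]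
  have hDpos : 0 < μw⁻¹ * (u.1 * u.1) + μg⁻¹ * (u.2 * u.2) + μo⁻¹ * (so u * so u) := by
    have := Dfun_pos hw hg ho u
    calc (0:ℝ) < Dfun μw μg μo u := this
    _ = _ := by simp [Dfun]; ring
  have hDne := ne_of_gt hDpos
  have hne : μg * (μw⁻¹ * (u.1 * u.1) + μg⁻¹ * (u.2 * u.2) + μo⁻¹ * (so u * so u)) ≠ 0 := by
    positivity
  have hden := hD.const_mul μg
  have hinv := (hasFDerivAt_inv' (𝕜 := ℝ) hne).comp u hden
  have heq : fg μw μg μo = fun y : ℝ × ℝ => (y.2 * y.2) *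
      (Inv.inv ∘ fun y : ℝ × ℝ =>
        μg * (μw⁻¹ * (y.1 * y.1) + μg⁻¹ * (y.2 * y.2) + μo⁻¹ * (so y * so y))) y := by
    funext y; simp [fg, Function.comp, div_eq_mul_inv, Dfun]; ring_nf
  have hfd : HasFDerivAt (fun y : ℝ × ℝ => (y.2 * y.2) *
      (Inv.inv ∘ fun y : ℝ × ℝ =>
        μg * (μw⁻¹ * (y.1 * y.1) + μg⁻¹ * (y.2 * y.2) + μo⁻¹ * (so y * so y))) y) _ u :=
    h1.mul hinv
  rw [heq, hfd.fderiv]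
  simp only [ContinuousLinearMap.add_apply, ContinuousLinearMap.smul_apply,
    ContinuousLinearMap.comp_apply, ContinuousLinearMap.neg_apply,
    ContinuousLinearMap.sub_apply, ContinuousLinearMap.coe_fst',
    ContinuousLinearMap.coe_snd', ContinuousLinearMap.mulLeftRight_apply,
    smul_eq_mul, Function.comp]
  set d : ℝ := μw⁻¹ * (u.1 * u.1) + μg⁻¹ * (u.2 * u.2) + μo⁻¹ * (so u * so u) with hd
  field_simp [hw.ne', hg.ne', ho.ne', hDne]
  ring

/-- Explicit Jacobian entries. -/
def A11 (μw μg μo : ℝ) (u : ℝ × ℝ) : ℝ :=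
  (2*u.1*Dfun μw μg μo u - u.1^2*(2*u.1/μw - 2*so u/μo)) / (μw * (Dfun μw μg μo u)^2)
def A12 (μw μg μo : ℝ) (u : ℝ × ℝ) : ℝ :=
  (-(u.1^2*(2*u.2/μg - 2*so u/μo))) / (μw * (Dfun μw μg μo u)^2)
def A21 (μw μg μo : ℝ) (u : ℝ × ℝ) : ℝ :=
  (-(u.2^2*(2*u.1/μw - 2*so u/μo))) / (μg * (Dfun μw μg μo u)^2)
def A22 (μw μg μo : ℝ) (u : ℝ × ℝ) : ℝ :=
  (2*u.2*Dfun μw μg μo u - u.2^2*(2*u.2/μg - 2*so u/μo)) / (μg * (Dfun μw μg μo u)^2)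

lemma jac_eq (μw μg μo : ℝ) (hw : 0 < μw) (hg : 0 < μg) (ho : 0 < μo) (u : ℝ × ℝ) :
    jac μw μg μo u =
      !![A11 μw μg μo u, A12 μw μg μo u; A21 μw μg μo u, A22 μw μg μo u] := by
  have e11 : fderiv ℝ (fw μw μg μo) u (1, 0) = A11 μw μg μo u := by
    rw [fderiv_fw_apply μw μg μo hw hg ho u (1, 0)]; unfold A11; norm_num
  have e12 : fderiv ℝ (fw μw μg μo) u (0, 1) = A12 μw μg μo u := by
    rw [fderiv_fw_apply μw μg μo hw hg ho u (0, 1)]; unfold A12; norm_num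
  have e21 : fderiv ℝ (fg μw μg μo) u (1, 0) = A21 μw μg μo u := by
    rw [fderiv_fg_apply μw μg μo hw hg ho u (1, 0)]; unfold A21; norm_num
  have e22 : fderiv ℝ (fg μw μg μo) u (0, 1) = A22 μw μg μo u := by
    rw [fderiv_fg_apply μw μg μo hw hg ho u (0, 1)]; unfold A22; norm_num
  unfold jac
  rw [e11, e12, e21, e22]

lemma eigen_fast (a b c d v0 v1 μ : ℝ) (hv0 : v0 ≠ 0) (hv1 : v1 ≠ 0)
    (e1 : a*v0 + b*v1 = μ*v0) (e2 : c*v0 + d*v1 = μ*v1) (hs : a + d ≤ 2*μ) :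
    (!![a, b; c, d]).mulVec ![v0, v1] =
      (((!![a, b; c, d]).trace +
        Real.sqrt ((!![a, b; c, d]).trace ^ 2 - 4 * (!![a, b; c, d]).det)) / 2) • ![v0, v1] := by
  have key : (μ - a) * (μ - d) = b * c := by
    have h3 : ((μ - a) * (μ - d)) * (v0 * v1) = (b * c) * (v0 * v1) := by
      linear_combination (-(c*v0))*e1 + (-((μ - a)*v0))*e2
    exact mul_right_cancel₀ (mul_ne_zero hv0 hv1) h3
  have hsq : (a + d)^2 - 4*(a*d - b*c) = (2*μ - (a+d))^2 := by linear_combination (-4)*key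
  rw [Matrix.trace_fin_two_of, Matrix.det_fin_two_of, hsq, Real.sqrt_sq (by linarith)]
  funext i
  fin_cases i
  · simp [Matrix.mulVec, dotProduct, Fin.sum_univ_two]
    linear_combination e1
  · simp [Matrix.mulVec, dotProduct, Fin.sum_univ_two]
    linear_combination e2

lemma eigen_slow (a b c d v0 v1 μ : ℝ) (hv0 : v0 ≠ 0) (hv1 : v1 ≠ 0)
    (e1 : a*v0 + b*v1 = μ*v0) (e2 : c*v0 + d*v1 = μ*v1) (hs : 2*μ ≤ a + d) :
    (!![a, b; c, d]).mulVec ![v0, v1] =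
      (((!![a, b; c, d]).trace -
        Real.sqrt ((!![a, b; c, d]).trace ^ 2 - 4 * (!![a, b; c, d]).det)) / 2) • ![v0, v1] := by
  have key : (μ - a) * (μ - d) = b * c := by
    have h3 : ((μ - a) * (μ - d)) * (v0 * v1) = (b * c) * (v0 * v1) := by
      linear_combination (-(c*v0))*e1 + (-((μ - a)*v0))*e2
    exact mul_right_cancel₀ (mul_ne_zero hv0 hv1) h3
  have hsq : (a + d)^2 - 4*(a*d - b*c) = ((a+d) - 2*μ)^2 := by linear_combination (-4)*key
  rw [Matrix.trace_fin_two_of, Matrix.det_fin_two_of, hsq, Real.sqrt_sq (by linarith)]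
  funext i
  fin_cases i
  · simp [Matrix.mulVec, dotProduct, Fin.sum_univ_two]
    linear_combination e1
  · simp [Matrix.mulVec, dotProduct, Fin.sum_univ_two]
    linear_combination e2

lemma lineWO (μw μg μo : ℝ) (hw : 0 < μw) (hg : 0 < μg) (ho : 0 < μo)
    (u : ℝ × ℝ) (s : ℝ) (h1 : u.1 = μw*s) (hso : so u = μo*s) :
    A21 μw μg μo u = 0 ∧
    A11 μw μg μo u * μw + A12 μw μg μo u * (-(μw+μo)) = A22 μw μg μo u * μw ∧
    A22 μw μg μo u - A11 μw μg μo u =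
      2*(μw+μo)*s^2*(u.2/μg - s) / (Dfun μw μg μo u)^2 := by
  have hDne := ne_of_gt (Dfun_pos hw hg ho u)
  have hDval : Dfun μw μg μo u = μw*s^2 + u.2^2/μg + μo*s^2 := by
    unfold Dfun; rw [h1, hso]; field_simp
  have hz : 2*u.1/μw - 2*so u/μo = 0 := by rw [h1, hso]; field_simp; ring
  refine ⟨?_, ?_, ?_⟩
  · unfold A21; rw [hz]; simp
  · unfold A11 A12 A22
    field_simp
    rw [h1, hso, hDval]
    field_simp
    ring
  · unfold A11 A22
    field_simp
    rw [h1, hso, hDval]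
    field_simp
    ring

lemma lineGO (μw μg μo : ℝ) (hw : 0 < μw) (hg : 0 < μg) (ho : 0 < μo)
    (u : ℝ × ℝ) (s : ℝ) (h2 : u.2 = μg*s) (hso : so u = μo*s) :
    A12 μw μg μo u = 0 ∧
    A21 μw μg μo u * (-(μg+μo)) + A22 μw μg μo u * μg = A11 μw μg μo u * μg ∧
    A11 μw μg μo u - A22 μw μg μo u =
      2*(μg+μo)*s^2*(u.1/μw - s) / (Dfun μw μg μo u)^2 := by
  have hDne := ne_of_gt (Dfun_pos hw hg ho u)
  have hDval : Dfun μw μg μo u = u.1^2/μw + μg*s^2 + μo*s^2 := by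
    unfold Dfun; rw [h2, hso]; field_simp
  have hz : 2*u.2/μg - 2*so u/μo = 0 := by rw [h2, hso]; field_simp; ring
  refine ⟨?_, ?_, ?_⟩
  · unfold A12; rw [hz]; simp
  · unfold A21 A22 A11
    field_simp
    rw [h2, hso, hDval]
    field_simp
    ring
  · unfold A11 A22
    field_simp
    rw [h2, hso, hDval]
    field_simp
    ring

lemma lineWG (μw μg μo : ℝ) (hw : 0 < μw) (hg : 0 < μg) (ho : 0 < μo)
    (u : ℝ × ℝ) (s : ℝ) (h1 : u.1 = μw*s) (h2 : u.2 = μg*s) :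
    (A11 μw μg μo u * μw + A12 μw μg μo u * μg =
      (2*s*so u*(so u + (μw+μg)*s)/(μo*(Dfun μw μg μo u)^2)) * μw) ∧
    (A21 μw μg μo u * μw + A22 μw μg μo u * μg =
      (2*s*so u*(so u + (μw+μg)*s)/(μo*(Dfun μw μg μo u)^2)) * μg) ∧
    2*(2*s*so u*(so u + (μw+μg)*s)/(μo*(Dfun μw μg μo u)^2))
        - (A11 μw μg μo u + A22 μw μg μo u) =
      2*(μw+μg)*s^2*(so u/μo - s) / (Dfun μw μg μo u)^2 := by
  have hDne := ne_of_gt (Dfun_pos hw hg ho u)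
  have hDval : Dfun μw μg μo u = μw*s^2 + μg*s^2 + so u^2/μo := by
    unfold Dfun; rw [h1, h2]; field_simp
  refine ⟨?_, ?_, ?_⟩
  · unfold A11 A12
    field_simp
    rw [h1, h2, hDval]
    field_simp
    ring
  · unfold A21 A22
    field_simp
    rw [h1, h2, hDval]
    field_simp
    ring
  · unfold A11 A22
    field_simp
    rw [h1, h2, hDval]
    field_simp
    ring

lemma caseGU (μw μg μo : ℝ) (hw : 0 < μw) (hg : 0 < μg) (ho : 0 < μo)
    {b : ℝ} (hb0 : 0 < b) (hb1 : b < 1) (u : ℝ × ℝ)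
    (h1 : u.1 = b*μw/(μw+μg+μo)) (h2 : u.2 = 1 - b*(μw+μo)/(μw+μg+μo)) :
    (jac μw μg μo u).mulVec ![μw, -(μw+μo)] =
      (((jac μw μg μo u).trace +
        Real.sqrt ((jac μw μg μo u).trace ^ 2 - 4 * (jac μw μg μo u).det)) / 2) •
          ![μw, -(μw+μo)] := by
  have hμt : (0:ℝ) < μw+μg+μo := by linarith
  have h1' : u.1 = μw*(b/(μw+μg+μo)) := by rw [h1]; ring
  have hso : so u = μo*(b/(μw+μg+μo)) := by
    unfold so; rw [h1, h2]; field_simp; ring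
  obtain ⟨hz, he1, hdiff⟩ := lineWO μw μg μo hw hg ho u (b/(μw+μg+μo)) h1' hso
  have hy : u.2/μg - b/(μw+μg+μo) = (1-b)/μg := by
    rw [h2]; field_simp; ring
  rw [jac_eq μw μg μo hw hg ho u]
  refine eigen_fast _ _ _ _ _ _ (A22 μw μg μo u) hw.ne'
    (neg_ne_zero.mpr (by positivity)) he1 (by rw [hz]; ring) ?_
  have h0 : 0 ≤ A22 μw μg μo u - A11 μw μg μo u := by
    rw [hdiff, hy]
    apply div_nonneg _ (sq_nonneg _)
    have h1b : (0:ℝ) ≤ (1-b)/μg := div_nonneg (by linarith) hg.le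
    exact mul_nonneg (by positivity) h1b
  linarith

lemma caseUD (μw μg μo : ℝ) (hw : 0 < μw) (hg : 0 < μg) (ho : 0 < μo)
    {b : ℝ} (hb0 : 0 < b) (hb1 : b < 1) (u : ℝ × ℝ)
    (h1 : u.1 = μw*((1-b)/(μw+μg+μo) + b/(μw+μo)))
    (h2 : u.2 = (1-b)*μg/(μw+μg+μo)) :
    (jac μw μg μo u).mulVec ![μw, -(μw+μo)] =
      (((jac μw μg μo u).trace -
        Real.sqrt ((jac μw μg μo u).trace ^ 2 - 4 * (jac μw μg μo u).det)) / 2) •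
          ![μw, -(μw+μo)] := by
  have hμt : (0:ℝ) < μw+μg+μo := by linarith
  have hwo : (0:ℝ) < μw+μo := by linarith
  have hso : so u = μo*((1-b)/(μw+μg+μo) + b/(μw+μo)) := by
    unfold so; rw [h1, h2]; field_simp; ring
  obtain ⟨hz, he1, hdiff⟩ :=
    lineWO μw μg μo hw hg ho u ((1-b)/(μw+μg+μo) + b/(μw+μo)) h1 hso
  have hy : u.2/μg - ((1-b)/(μw+μg+μo) + b/(μw+μo)) = -(b/(μw+μo)) := by
    rw [h2]; field_simp; ring
  rw [jac_eq μw μg μo hw hg ho u]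
  refine eigen_slow _ _ _ _ _ _ (A22 μw μg μo u) hw.ne'
    (neg_ne_zero.mpr (by positivity)) he1 (by rw [hz]; ring) ?_
  have h0 : A22 μw μg μo u - A11 μw μg μo u ≤ 0 := by
    rw [hdiff, hy]
    apply div_nonpos_iff.mpr
    apply Or.inr
    constructor
    · have : (0:ℝ) ≤ 2*(μw+μo)*((1-b)/(μw+μg+μo) + b/(μw+μo))^2*(b/(μw+μo)) := by positivity
      nlinarith
    · exact sq_nonneg _
  linarith

lemma caseWU (μw μg μo : ℝ) (hw : 0 < μw) (hg : 0 < μg) (ho : 0 < μo)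
    {b : ℝ} (hb0 : 0 < b) (hb1 : b < 1) (u : ℝ × ℝ)
    (h1 : u.1 = 1 - b*(μg+μo)/(μw+μg+μo)) (h2 : u.2 = b*μg/(μw+μg+μo)) :
    (jac μw μg μo u).mulVec ![-(μg+μo), μg] =
      (((jac μw μg μo u).trace +
        Real.sqrt ((jac μw μg μo u).trace ^ 2 - 4 * (jac μw μg μo u).det)) / 2) •
          ![-(μg+μo), μg] := by
  have hμt : (0:ℝ) < μw+μg+μo := by linarith
  have h2' : u.2 = μg*(b/(μw+μg+μo)) := by rw [h2]; ring
  have hso : so u = μo*(b/(μw+μg+μo)) := by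
    unfold so; rw [h1, h2]; field_simp; ring
  obtain ⟨hz, he2, hdiff⟩ := lineGO μw μg μo hw hg ho u (b/(μw+μg+μo)) h2' hso
  have hy : u.1/μw - b/(μw+μg+μo) = (1-b)/μw := by
    rw [h1]; field_simp; ring
  rw [jac_eq μw μg μo hw hg ho u]
  refine eigen_fast _ _ _ _ _ _ (A11 μw μg μo u)
    (neg_ne_zero.mpr (by positivity)) hg.ne' (by rw [hz]; ring) he2 ?_
  have h0 : 0 ≤ A11 μw μg μo u - A22 μw μg μo u := by
    rw [hdiff, hy]
    apply div_nonneg _ (sq_nonneg _)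
    have h1b : (0:ℝ) ≤ (1-b)/μw := div_nonneg (by linarith) hw.le
    exact mul_nonneg (by positivity) h1b
  linarith

lemma caseUE (μw μg μo : ℝ) (hw : 0 < μw) (hg : 0 < μg) (ho : 0 < μo)
    {b : ℝ} (hb0 : 0 < b) (hb1 : b < 1) (u : ℝ × ℝ)
    (h1 : u.1 = (1-b)*μw/(μw+μg+μo))
    (h2 : u.2 = μg*((1-b)/(μw+μg+μo) + b/(μg+μo))) :
    (jac μw μg μo u).mulVec ![-(μg+μo), μg] =
      (((jac μw μg μo u).trace -
        Real.sqrt ((jac μw μg μo u).trace ^ 2 - 4 * (jac μw μg μo u).det)) / 2) •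
          ![-(μg+μo), μg] := by
  have hμt : (0:ℝ) < μw+μg+μo := by linarith
  have hgo : (0:ℝ) < μg+μo := by linarith
  have hso : so u = μo*((1-b)/(μw+μg+μo) + b/(μg+μo)) := by
    unfold so; rw [h1, h2]; field_simp; ring
  obtain ⟨hz, he2, hdiff⟩ :=
    lineGO μw μg μo hw hg ho u ((1-b)/(μw+μg+μo) + b/(μg+μo)) h2 hso
  have hy : u.1/μw - ((1-b)/(μw+μg+μo) + b/(μg+μo)) = -(b/(μg+μo)) := by
    rw [h1]; field_simp; ring
  rw [jac_eq μw μg μo hw hg ho u]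
  refine eigen_slow _ _ _ _ _ _ (A11 μw μg μo u)
    (neg_ne_zero.mpr (by positivity)) hg.ne' (by rw [hz]; ring) he2 ?_
  have h0 : A11 μw μg μo u - A22 μw μg μo u ≤ 0 := by
    rw [hdiff, hy]
    apply div_nonpos_iff.mpr
    apply Or.inr
    constructor
    · have : (0:ℝ) ≤ 2*(μg+μo)*((1-b)/(μw+μg+μo) + b/(μg+μo))^2*(b/(μg+μo)) := by positivity
      nlinarith
    · exact sq_nonneg _
  linarith

lemma caseOU (μw μg μo : ℝ) (hw : 0 < μw) (hg : 0 < μg) (ho : 0 < μo)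
    {b : ℝ} (hb0 : 0 < b) (hb1 : b < 1) (u : ℝ × ℝ)
    (h1 : u.1 = b*μw/(μw+μg+μo)) (h2 : u.2 = b*μg/(μw+μg+μo)) :
    (jac μw μg μo u).mulVec ![μw, μg] =
      (((jac μw μg μo u).trace +
        Real.sqrt ((jac μw μg μo u).trace ^ 2 - 4 * (jac μw μg μo u).det)) / 2) •
          ![μw, μg] := by
  have hμt : (0:ℝ) < μw+μg+μo := by linarith
  have h1' : u.1 = μw*(b/(μw+μg+μo)) := by rw [h1]; ring
  have h2' : u.2 = μg*(b/(μw+μg+μo)) := by rw [h2]; ring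
  obtain ⟨he1, he2, hdiff⟩ := lineWG μw μg μo hw hg ho u (b/(μw+μg+μo)) h1' h2'
  have hso : so u = 1 - (μw+μg)*(b/(μw+μg+μo)) := by
    unfold so; rw [h1, h2]; field_simp; ring
  have hy : so u/μo - b/(μw+μg+μo) = (1-b)/μo := by
    rw [hso]; field_simp; ring
  rw [jac_eq μw μg μo hw hg ho u]
  refine eigen_fast _ _ _ _ _ _
    (2*(b/(μw+μg+μo))*so u*(so u + (μw+μg)*(b/(μw+μg+μo)))/(μo*(Dfun μw μg μo u)^2))
    hw.ne' hg.ne' he1 he2 ?_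
  have h0 : 0 ≤ 2*(μw+μg)*(b/(μw+μg+μo))^2*(so u/μo - b/(μw+μg+μo))
      / (Dfun μw μg μo u)^2 := by
    rw [hy]
    apply div_nonneg _ (sq_nonneg _)
    have h1b : (0:ℝ) ≤ (1-b)/μo := div_nonneg (by linarith) ho.le
    exact mul_nonneg (by positivity) h1b
  linarith [hdiff, h0]

lemma caseUB (μw μg μo : ℝ) (hw : 0 < μw) (hg : 0 < μg) (ho : 0 < μo)
    {b : ℝ} (hb0 : 0 < b) (hb1 : b < 1) (u : ℝ × ℝ)
    (h1 : u.1 = μw*((1-b)/(μw+μg+μo) + b/(μw+μg)))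
    (h2 : u.2 = μg*((1-b)/(μw+μg+μo) + b/(μw+μg))) :
    (jac μw μg μo u).mulVec ![μw, μg] =
      (((jac μw μg μo u).trace -
        Real.sqrt ((jac μw μg μo u).trace ^ 2 - 4 * (jac μw μg μo u).det)) / 2) •
          ![μw, μg] := by
  have hμt : (0:ℝ) < μw+μg+μo := by linarith
  have hwg : (0:ℝ) < μw+μg := by linarith
  obtain ⟨he1, he2, hdiff⟩ :=
    lineWG μw μg μo hw hg ho u ((1-b)/(μw+μg+μo) + b/(μw+μg)) h1 h2
  have hso : so u = 1 - (μw+μg)*((1-b)/(μw+μg+μo) + b/(μw+μg)) := by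
    unfold so; rw [h1, h2]; field_simp; ring
  have hy : so u/μo - ((1-b)/(μw+μg+μo) + b/(μw+μg)) = -(b/(μw+μg)) := by
    rw [hso]; field_simp; ring
  rw [jac_eq μw μg μo hw hg ho u]
  refine eigen_slow _ _ _ _ _ _
    (2*((1-b)/(μw+μg+μo) + b/(μw+μg))*so u*(so u + (μw+μg)*((1-b)/(μw+μg+μo) + b/(μw+μg)))
      /(μo*(Dfun μw μg μo u)^2))
    hw.ne' hg.ne' he1 he2 ?_
  have h0 : 2*(μw+μg)*((1-b)/(μw+μg+μo) + b/(μw+μg))^2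
        *(so u/μo - ((1-b)/(μw+μg+μo) + b/(μw+μg))) / (Dfun μw μg μo u)^2 ≤ 0 := by
    rw [hy]
    apply div_nonpos_iff.mpr
    apply Or.inr
    constructor
    · have : (0:ℝ) ≤ 2*(μw+μg)*((1-b)/(μw+μg+μo) + b/(μw+μg))^2*(b/(μw+μg)) := by positivity
      nlinarith
    · exact sq_nonneg _
  linarith [hdiff, h0]

/-- on each invariant line through the umbilic point `U`, the line
direction is a fast eigenvector on the vertex side of `U` and a slow eigenvector on the
other side. -/
theorem invariant_line_fast_slow_splitting (μw μg μo : ℝ)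
    (hw : 0 < μw) (hg : 0 < μg) (ho : 0 < μo) :
    (∀ u ∈ openSegment ℝ (((0 : ℝ), (1 : ℝ)) : ℝ × ℝ)
        ((μw / (μw + μg + μo), μg / (μw + μg + μo)) : ℝ × ℝ),
      (jac μw μg μo u).mulVec (![μw, -(μw + μo)] : Fin 2 → ℝ) =
        (((jac μw μg μo u).trace +
          Real.sqrt ((jac μw μg μo u).trace ^ 2 - 4 * (jac μw μg μo u).det)) / 2) •
            (![μw, -(μw + μo)] : Fin 2 → ℝ)) ∧
    (∀ u ∈ openSegment ℝ ((μw / (μw + μg + μo), μg / (μw + μg + μo)) : ℝ × ℝ)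
        ((μw / (μw + μo), (0 : ℝ)) : ℝ × ℝ),
      (jac μw μg μo u).mulVec (![μw, -(μw + μo)] : Fin 2 → ℝ) =
        (((jac μw μg μo u).trace -
          Real.sqrt ((jac μw μg μo u).trace ^ 2 - 4 * (jac μw μg μo u).det)) / 2) •
            (![μw, -(μw + μo)] : Fin 2 → ℝ)) ∧
    (∀ u ∈ openSegment ℝ (((1 : ℝ), (0 : ℝ)) : ℝ × ℝ)
        ((μw / (μw + μg + μo), μg / (μw + μg + μo)) : ℝ × ℝ),
      (jac μw μg μo u).mulVec (![-(μg + μo), μg] : Fin 2 → ℝ) =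
        (((jac μw μg μo u).trace +
          Real.sqrt ((jac μw μg μo u).trace ^ 2 - 4 * (jac μw μg μo u).det)) / 2) •
            (![-(μg + μo), μg] : Fin 2 → ℝ)) ∧
    (∀ u ∈ openSegment ℝ ((μw / (μw + μg + μo), μg / (μw + μg + μo)) : ℝ × ℝ)
        (((0 : ℝ), μg / (μg + μo)) : ℝ × ℝ),
      (jac μw μg μo u).mulVec (![-(μg + μo), μg] : Fin 2 → ℝ) =
        (((jac μw μg μo u).trace -
          Real.sqrt ((jac μw μg μo u).trace ^ 2 - 4 * (jac μw μg μo u).det)) / 2) •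
            (![-(μg + μo), μg] : Fin 2 → ℝ)) ∧
    (∀ u ∈ openSegment ℝ (((0 : ℝ), (0 : ℝ)) : ℝ × ℝ)
        ((μw / (μw + μg + μo), μg / (μw + μg + μo)) : ℝ × ℝ),
      (jac μw μg μo u).mulVec (![μw, μg] : Fin 2 → ℝ) =
        (((jac μw μg μo u).trace +
          Real.sqrt ((jac μw μg μo u).trace ^ 2 - 4 * (jac μw μg μo u).det)) / 2) •
            (![μw, μg] : Fin 2 → ℝ)) ∧
    (∀ u ∈ openSegment ℝ ((μw / (μw + μg + μo), μg / (μw + μg + μo)) : ℝ × ℝ)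
        ((μw / (μw + μg), μg / (μw + μg)) : ℝ × ℝ),
      (jac μw μg μo u).mulVec (![μw, μg] : Fin 2 → ℝ) =
        (((jac μw μg μo u).trace -
          Real.sqrt ((jac μw μg μo u).trace ^ 2 - 4 * (jac μw μg μo u).det)) / 2) •
            (![μw, μg] : Fin 2 → ℝ)) := by
  have hμt : (0:ℝ) < μw+μg+μo := by linarith
  refine ⟨?_, ?_, ?_, ?_, ?_, ?_⟩
  · rintro u ⟨a, b, ha, hb, hab, huv⟩
    obtain rfl : a = 1 - b := by linarith
    refine caseGU μw μg μo hw hg ho hb (by linarith) u ?_ ?_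
    · rw [← huv]; simp only [Prod.fst_add, Prod.smul_fst, smul_eq_mul]; ring
    · rw [← huv]; simp only [Prod.snd_add, Prod.smul_snd, smul_eq_mul]
      field_simp; ring
  · rintro u ⟨a, b, ha, hb, hab, huv⟩
    obtain rfl : a = 1 - b := by linarith
    refine caseUD μw μg μo hw hg ho hb (by linarith) u ?_ ?_
    · rw [← huv]; simp only [Prod.fst_add, Prod.smul_fst, smul_eq_mul]; ring
    · rw [← huv]; simp only [Prod.snd_add, Prod.smul_snd, smul_eq_mul]; ring
  · rintro u ⟨a, b, ha, hb, hab, huv⟩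
    obtain rfl : a = 1 - b := by linarith
    refine caseWU μw μg μo hw hg ho hb (by linarith) u ?_ ?_
    · rw [← huv]; simp only [Prod.fst_add, Prod.smul_fst, smul_eq_mul]
      field_simp; ring
    · rw [← huv]; simp only [Prod.snd_add, Prod.smul_snd, smul_eq_mul]; ring
  · rintro u ⟨a, b, ha, hb, hab, huv⟩
    obtain rfl : a = 1 - b := by linarith
    refine caseUE μw μg μo hw hg ho hb (by linarith) u ?_ ?_
    · rw [← huv]; simp only [Prod.fst_add, Prod.smul_fst, smul_eq_mul]; ring
    · rw [← huv]; simp only [Prod.snd_add, Prod.smul_snd, smul_eq_mul]; ring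
  · rintro u ⟨a, b, ha, hb, hab, huv⟩
    obtain rfl : a = 1 - b := by linarith
    refine caseOU μw μg μo hw hg ho hb (by linarith) u ?_ ?_
    · rw [← huv]; simp only [Prod.fst_add, Prod.smul_fst, smul_eq_mul]; ring
    · rw [← huv]; simp only [Prod.snd_add, Prod.smul_snd, smul_eq_mul]; ring
  · rintro u ⟨a, b, ha, hb, hab, huv⟩
    obtain rfl : a = 1 - b := by linarith
    refine caseUB μw μg μo hw hg ho hb (by linarith) u ?_ ?_
    · rw [← huv]; simp only [Prod.fst_add, Prod.smul_fst, smul_eq_mul]; ring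
    · rw [← huv]; simp only [Prod.snd_add, Prod.smul_snd, smul_eq_mul]; ring

end ThreePhaseFlow
end
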